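/- arXiv:2006.11009 — 10 statements merged into one kernel-verified Lean document; each statement's English description precedes it below -/
import Mathlib

section
/- Let (X,d) be a finite metric space partitioned into m disjoint nonempty groups X_1,…,X_m, let k be a positive integer, let α ≥ 1, and for a nonempty C ⊆ X and a group X_i write cost_C(X_i) := Σ_{u∈X_i} min_{c∈C} d(u,c). Suppose C ⊆ X is nonempty with |C| ≤ k and C is an α-approximation for the weighted-sum objective, i.e. Σ_{i=1}^m (1/|X_i|)·cost_C(X_i) ≤ α · Σ_{i=1}^m (1/|X_i|)·cost_{C'}(X_i) for every nonempty C' ⊆ X with |C'| ≤ k. Then C is an α·m approximation for the fair (min-max) clustering objective: for every nonempty C* ⊆ X with |C*| ≤ k, max_{1≤i≤m} (1/|X_i|)·cost_C(X_i) ≤ α·m · max_{1≤i≤m} (1/|X_i|)·cost_{C*}(X_i). -/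
open Finset

/-- If a nonempty center set `C` with at most `k` centers is an
`α`-approximation for the weighted-sum clustering objective
`∑ i, (1/|X_i|) · cost_C(X_i)`, then it is an `α·m`-approximation for the fair
(min-max) clustering objective `max_i (1/|X_i|) · cost_C(X_i)`. -/
theorem fair_from_weighted_approx {X : Type*} [MetricSpace X] [Fintype X]
    {m : ℕ} (hm : 0 < m) (Xs : Fin m → Finset X)
    (hXne : ∀ i, (Xs i).Nonempty)
    (hXdisj : ∀ i j, i ≠ j → Disjoint (Xs i) (Xs j))
    (hXcover : ∀ x : X, ∃ i, x ∈ Xs i)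
    (k : ℕ) (hk : 0 < k)
    (α : ℝ) (hα : 1 ≤ α)
    (C : Finset X) (hC : C.Nonempty) (hCk : C.card ≤ k)
    (happrox : ∀ (C' : Finset X) (hC' : C'.Nonempty), C'.card ≤ k →
      ∑ i, (1 / ((Xs i).card : ℝ)) * ∑ u ∈ Xs i, C.inf' hC (fun c => dist u c)
        ≤ α * ∑ i, (1 / ((Xs i).card : ℝ)) * ∑ u ∈ Xs i, C'.inf' hC' (fun c => dist u c)) :
    ∀ (Cstar : Finset X) (hCstar : Cstar.Nonempty), Cstar.card ≤ k →
      univ.sup' (univ_nonempty_iff.mpr ⟨⟨0, hm⟩⟩)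
        (fun i => (1 / ((Xs i).card : ℝ)) * ∑ u ∈ Xs i, C.inf' hC (fun c => dist u c))
      ≤ α * m *
        univ.sup' (univ_nonempty_iff.mpr ⟨⟨0, hm⟩⟩)
          (fun i => (1 / ((Xs i).card : ℝ)) *
            ∑ u ∈ Xs i, Cstar.inf' hCstar (fun c => dist u c)) := by
  intro Cstar hCstar hCstark
  have hne : (univ : Finset (Fin m)).Nonempty := univ_nonempty_iff.mpr ⟨⟨0, hm⟩⟩
  set f := fun i => (1 / ((Xs i).card : ℝ)) * ∑ u ∈ Xs i, C.inf' hC (fun c => dist u c)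
  set g := fun i => (1 / ((Xs i).card : ℝ)) * ∑ u ∈ Xs i, Cstar.inf' hCstar (fun c => dist u c)
  have hf0 : ∀ i, 0 ≤ f i := fun i => by
    apply mul_nonneg (by positivity)
    exact Finset.sum_nonneg fun u _ => le_inf' hC _ fun c _ => dist_nonneg
  have hg0 : ∀ i, 0 ≤ g i := fun i => by
    apply mul_nonneg (by positivity)
    exact Finset.sum_nonneg fun u _ => le_inf' hCstar _ fun c _ => dist_nonneg
  have h1 : univ.sup' hne f ≤ ∑ i, f i := by
    apply Finset.sup'_le
    intro i _
    exact Finset.single_le_sum (fun j _ => hf0 j) (mem_univ i)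
  have h2 : ∑ i, f i ≤ α * ∑ i, g i := happrox Cstar hCstar hCstark
  have h3 : ∑ i, g i ≤ m * univ.sup' hne g := by
    calc ∑ i, g i ≤ ∑ _i : Fin m, univ.sup' hne g :=
          Finset.sum_le_sum fun i _ => Finset.le_sup' g (mem_univ i)
      _ = m * univ.sup' hne g := by
          rw [Finset.sum_const, card_univ, Fintype.card_fin, nsmul_eq_mul]
  have hα0 : 0 ≤ α := le_trans zero_le_one hα
  calc univ.sup' hne f ≤ α * ∑ i, g i := h1.trans h2
    _ ≤ α * (m * univ.sup' hne g) := by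
        apply mul_le_mul_of_nonneg_left h3 hα0
    _ = α * m * univ.sup' hne g := by ring
end

section
/- Fix an integer m ≥ 2 and a real D > 0. Let X = {x_1,…,x_m} be a metric space with d(x_i,x_j) = D for all i ≠ j, let the groups be the singletons X_i = {x_i}, and let k = m−1. Then: (a) there exists a feasible solution of FairLP-AbsError with objective value λ = D/m (namely y_v = 1−1/m for all v, z_{ii} = 1−1/m, and z_{ij} = 1/m for one fixed j ≠ i for each i); and (b) every nonempty set S ⊆ X with |S| ≤ m−1 satisfies max_{1≤i≤m} d(x_i,S) ≥ D. Consequently the integrality gap of FairLP-AbsError is at least m. -/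
open Finset

/-- Integrality-gap instance for FairLP-AbsError. `X` consists of
`m ≥ 2` points that are pairwise at distance `D`, the groups are the singletons
`X_i = {x_i}`, and `k = m - 1`. Then (a) there is a feasible fractional solution
of FairLP-AbsError with objective value `λ = D/m`, and (b) every nonempty set of
at most `m - 1` centers has fair objective (max over groups of the group's
average connection cost) at least `D`. Hence the integrality gap is at least `m`. -/
theorem fairLP_absError_integrality_gap {X : Type*} [MetricSpace X] [Fintype X]
    {m : ℕ} (hm : 2 ≤ m) (D : ℝ) (hD : 0 < D)
    (x : Fin m ≃ X)
    (hdist : ∀ i j : Fin m, i ≠ j → dist (x i) (x j) = D) :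
    (∃ (z : X → X → ℝ) (y : X → ℝ),
      (∀ u v, 0 ≤ z u v ∧ z u v ≤ 1) ∧
      (∀ v, 0 ≤ y v ∧ y v ≤ 1) ∧
      (∀ u, ∑ v, z u v = 1) ∧
      (∀ u v, z u v ≤ y v) ∧
      (∑ v, y v ≤ ((m - 1 : ℕ) : ℝ)) ∧
      (∀ i : Fin m, ∑ v, dist (x i) v * z (x i) v ≤ D / m)) ∧
    (∀ (S : Finset X) (hS : S.Nonempty), S.card ≤ m - 1 →
      D ≤ univ.sup' (univ_nonempty_iff.mpr ⟨⟨0, by omega⟩⟩)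
        (fun i : Fin m => S.inf' hS (fun c => dist (x i) c))) := by
  have hmR : (2:ℝ) ≤ (m:ℝ) := by exact_mod_cast hm
  have hm0 : (0:ℝ) < (m:ℝ) := by linarith
  have hinv : (1:ℝ)/(m:ℝ) ≤ 1/2 := by
    rw [div_le_div_iff₀ hm0 (by norm_num)]; linarith
  have hinv0 : (0:ℝ) < 1/(m:ℝ) := by positivity
  haveI : NeZero m := ⟨by omega⟩
  have hne : ∀ i : Fin m, i ≠ i + 1 := by
    intro i h
    have h1 : (0:Fin m) = 1 := add_left_cancel (a := i) (by simpa using h)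
    have h3 := congrArg Fin.val h1
    rw [Fin.val_zero, Fin.val_one', Nat.mod_eq_of_lt (by omega)] at h3
    exact absurd h3 (by omega)
  have hcardX : Fintype.card X = m := by
    rw [← Fintype.card_fin m]; exact Fintype.card_congr x.symm
  constructor
  · -- part (a)
    refine ⟨fun u v => (if x.symm v = x.symm u then 1 - 1/(m:ℝ) else 0)
        + (if x.symm v = x.symm u + 1 then 1/(m:ℝ) else 0),
      fun _ => 1 - 1/(m:ℝ), ?_, ?_, ?_, ?_, ?_, ?_⟩
    · intro u v
      dsimp only
      constructor
      · split_ifs with h1 h2 h2 <;> [exact absurd (h1 ▸ h2) (hne _); linarith; linarith; linarith]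
      · split_ifs with h1 h2 h2 <;> [exact absurd (h1 ▸ h2) (hne _); linarith; linarith; linarith]
    · intro v; constructor <;> [linarith; linarith]
    · intro u
      rw [← Equiv.sum_comp x (fun v => (if x.symm v = x.symm u then 1 - 1/(m:ℝ) else 0)
        + (if x.symm v = x.symm u + 1 then 1/(m:ℝ) else 0))]
      simp only [Equiv.symm_apply_apply]
      rw [Finset.sum_add_distrib, Finset.sum_ite_eq' univ (x.symm u) (fun _ => 1 - 1/(m:ℝ)),
        Finset.sum_ite_eq' univ (x.symm u + 1) (fun _ => 1/(m:ℝ))]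
      simp
    · intro u v
      dsimp only
      split_ifs with h1 h2 h2 <;> [exact absurd (h1 ▸ h2) (hne _); linarith; linarith; linarith]
    · rw [Finset.sum_const, Finset.card_univ, hcardX, nsmul_eq_mul]
      have h1 : ((m-1:ℕ):ℝ) = (m:ℝ) - 1 := by
        rw [Nat.cast_sub (by omega)]; norm_num
      have h2 : (m:ℝ) * (1/(m:ℝ)) = 1 := by field_simp
      rw [h1]; nlinarith
    · intro i
      rw [← Equiv.sum_comp x (fun v => dist (x i) v *
        ((if x.symm v = x.symm (x i) then 1 - 1/(m:ℝ) else 0)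
        + (if x.symm v = x.symm (x i) + 1 then 1/(m:ℝ) else 0)))]
      simp only [Equiv.symm_apply_apply]
      have key : ∀ j : Fin m, dist (x i) (x j) * ((if j = i then 1 - 1/(m:ℝ) else 0)
          + (if j = i + 1 then 1/(m:ℝ) else 0))
          = (if j = i then dist (x i) (x j) * (1 - 1/(m:ℝ)) else 0)
          + (if j = i + 1 then dist (x i) (x j) * (1/(m:ℝ)) else 0) := by
        intro j; split_ifs <;> ring
      rw [Finset.sum_congr rfl (fun j _ => key j), Finset.sum_add_distrib,
        Finset.sum_ite_eq' univ i, Finset.sum_ite_eq' univ (i + 1)]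
      simp only [mem_univ, if_true, dist_self, zero_mul, zero_add]
      rw [hdist i (i+1) (hne i), mul_one_div]
  · -- part (b)
    intro S hS hcard
    have hSU : S ≠ univ := by
      intro h
      rw [h, Finset.card_univ, hcardX] at hcard
      omega
    obtain ⟨a, ha⟩ : ∃ a : X, a ∉ S := by
      by_contra hc
      push_neg at hc
      exact hSU (Finset.eq_univ_iff_forall.mpr hc)
    set i := x.symm a with hi
    have hxi : x i = a := x.apply_symm_apply a
    have hDle : D ≤ S.inf' hS (fun c => dist (x i) c) := by
      apply Finset.le_inf'
      intro c hc
      have hcj : x (x.symm c) = c := x.apply_symm_apply c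
      have hij : i ≠ x.symm c := by
        intro h; apply ha; rw [← hxi, h, hcj]; exact hc
      rw [← hcj]
      exact (hdist i (x.symm c) hij).ge
    exact le_trans hDle (Finset.le_sup'
      (fun i : Fin m => S.inf' hS fun c => dist (x i) c) (Finset.mem_univ i))
end

section
/- Let (z,y,λ) be a feasible solution of FairLP-AbsError and let ε ∈ (0,1). Then there exists a nonempty set S ⊆ X such that |S| ≤ k/(1−ε) and, for every group i, (1/|X_i|) Σ_{u∈X_i} d(u,S) ≤ 2λ/ε. -/
open Finset

open scoped Classical in
noncomputable def greedySel {X : Type*} [MetricSpace X] [DecidableEq X]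
    (b r : X → ℝ) (T : Finset X) : Finset X :=
  if h : T.Nonempty then
    let u := (T.exists_min_image r h).choose
    insert u (greedySel b r (T.filter fun w => w ≠ u ∧ b w + b u < dist w u))
  else ∅
termination_by T.card
decreasing_by
  apply Finset.card_lt_card
  rw [Finset.ssubset_iff_of_subset (Finset.filter_subset _ _)]
  exact ⟨(T.exists_min_image r h).choose, (T.exists_min_image r h).choose_spec.1,
    by simp⟩

theorem greedySel_spec {X : Type*} [MetricSpace X] [DecidableEq X]
    (b r : X → ℝ) (hb : ∀ w, 0 ≤ b w) (T : Finset X) :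
    (greedySel b r T ⊆ T) ∧
    (∀ u ∈ greedySel b r T, ∀ u' ∈ greedySel b r T, u ≠ u' → b u + b u' < dist u u') ∧
    (∀ w ∈ T, ∃ u ∈ greedySel b r T, r u ≤ r w ∧ dist w u ≤ b w + b u) := by
  classical
  induction T using Finset.strongInductionOn with
  | _ T ih =>
    by_cases h : T.Nonempty
    · obtain ⟨hu, hmin⟩ := (T.exists_min_image r h).choose_spec
      set u := (T.exists_min_image r h).choose with hudef
      set T' := T.filter fun w => w ≠ u ∧ b w + b u < dist w u with hT'
      have hTsub : T' ⊂ T := by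
        rw [Finset.ssubset_iff_of_subset (Finset.filter_subset _ _)]
        exact ⟨u, hu, by simp [hT']⟩
      obtain ⟨ihsub, ihsep, ihcov⟩ := ih T' hTsub
      have hunf : greedySel b r T = insert u (greedySel b r T') := by
        rw [greedySel.eq_def]
        simp [h, hT', hudef]
      refine ⟨?_, ?_, ?_⟩
      · rw [hunf]
        exact Finset.insert_subset hu (ihsub.trans hTsub.subset)
      · rw [hunf]
        intro a ha a' ha' hne
        rcases Finset.mem_insert.mp ha with rfl | ha
        · rcases Finset.mem_insert.mp ha' with rfl | ha'
          · exact absurd rfl hne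
          · have := (Finset.mem_filter.mp (ihsub ha')).2.2
            rw [dist_comm] at this
            linarith
        · rcases Finset.mem_insert.mp ha' with rfl | ha'
          · have := (Finset.mem_filter.mp (ihsub ha)).2.2
            linarith
          · exact ihsep a ha a' ha' hne
      · intro w hw
        by_cases hcase : dist w u ≤ b w + b u
        · exact ⟨u, by rw [hunf]; exact Finset.mem_insert_self _ _, hmin w hw, hcase⟩
        · have hwne : w ≠ u := by
            intro hwu
            apply hcase
            rw [hwu, dist_self]
            exact add_nonneg (hb u) (hb u)
          have hw' : w ∈ T' := Finset.mem_filter.mpr ⟨hw, hwne, not_le.mp hcase⟩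
          obtain ⟨a, ha, har, had⟩ := ihcov w hw'
          exact ⟨a, by rw [hunf]; exact Finset.mem_insert_of_mem ha, har, had⟩
    · rw [greedySel.eq_def]
      simp [Finset.not_nonempty_iff_eq_empty.mp h]

theorem greedySel_nonempty {X : Type*} [MetricSpace X] [DecidableEq X]
    (b r : X → ℝ) {T : Finset X} (h : T.Nonempty) :
    (greedySel b r T).Nonempty := by
  rw [greedySel.eq_def]
  simp [h]

/-- Theorem "bicriteria": From any feasible solution `(z, y, λ)` of
FairLP-AbsError and any `ε ∈ (0,1)` one can extract a nonempty set `S` of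
centers with `|S| ≤ k/(1-ε)` whose average connection cost for every group is
at most `2λ/ε`. -/
theorem fairLP_absError_bicriteria {X : Type*} [MetricSpace X] [Fintype X]
    {m : ℕ} (hm : 0 < m) (Xs : Fin m → Finset X)
    (hXne : ∀ i, (Xs i).Nonempty)
    (hXdisj : ∀ i j, i ≠ j → Disjoint (Xs i) (Xs j))
    (hXcover : ∀ x : X, ∃ i, x ∈ Xs i)
    (k : ℕ) (hk : 0 < k)
    (z : X → X → ℝ) (y : X → ℝ) (lam : ℝ)
    (hz01 : ∀ u v, 0 ≤ z u v ∧ z u v ≤ 1)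
    (hy01 : ∀ v, 0 ≤ y v ∧ y v ≤ 1)
    (hz1 : ∀ u, ∑ v, z u v = 1)
    (hzy : ∀ u v, z u v ≤ y v)
    (hyk : ∑ v, y v ≤ (k : ℝ))
    (hlam : ∀ i, (1 / ((Xs i).card : ℝ)) * ∑ u ∈ Xs i, ∑ v, dist u v * z u v ≤ lam)
    (ε : ℝ) (hε0 : 0 < ε) (hε1 : ε < 1) :
    ∃ (S : Finset X) (hS : S.Nonempty),
      (S.card : ℝ) ≤ k / (1 - ε) ∧
      ∀ i, (1 / ((Xs i).card : ℝ)) * ∑ u ∈ Xs i, S.inf' hS (fun c => dist u c)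
        ≤ 2 * lam / ε := by
  classical
  have hXnonempty : Nonempty X := ⟨(hXne ⟨0, hm⟩).choose⟩
  set R : X → ℝ := fun u => ∑ v, dist u v * z u v with hRdef
  have hR0 : ∀ u, 0 ≤ R u := fun u => Finset.sum_nonneg fun v _ =>
    mul_nonneg dist_nonneg (hz01 u v).1
  set b : X → ℝ := fun u => R u / ε with hbdef
  have hb0 : ∀ u, 0 ≤ b u := fun u => div_nonneg (hR0 u) hε0.le
  obtain ⟨hsub, hsep, hcov⟩ := greedySel_spec b R hb0 (Finset.univ : Finset X)
  set S := greedySel b R (Finset.univ : Finset X) with hSdef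
  have hSne : S.Nonempty := greedySel_nonempty b R Finset.univ_nonempty
  set B : X → Finset X := fun u => Finset.univ.filter (fun v => dist u v ≤ b u) with hBdef
  -- Markov bound
  have hmark : ∀ u : X, 1 - ε ≤ ∑ v ∈ B u, z u v := by
    intro u
    have hsplit :
        ∑ v ∈ B u, z u v
          + ∑ v ∈ Finset.univ.filter (fun v => ¬ dist u v ≤ b u), z u v = 1 := by
      rw [hBdef]
      rw [Finset.sum_filter_add_sum_filter_not]
      exact hz1 u
    have hout : ∑ v ∈ Finset.univ.filter (fun v => ¬ dist u v ≤ b u), z u v ≤ ε := by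
      set M := ∑ v ∈ Finset.univ.filter (fun v => ¬ dist u v ≤ b u), z u v with hM
      have hM0 : 0 ≤ M := Finset.sum_nonneg fun v _ => (hz01 u v).1
      by_cases hRu : R u = 0
      · have hzero : M = 0 := by
          rw [hM]
          apply Finset.sum_eq_zero
          intro v hv
          have hdv : ¬ dist u v ≤ b u := (Finset.mem_filter.mp hv).2
          have hbu : b u = 0 := by rw [hbdef]; simp [hRu]
          have hdvpos : 0 < dist u v := lt_of_not_ge (by rwa [hbu] at hdv)
          have hall : ∀ v ∈ (Finset.univ : Finset X), 0 ≤ dist u v * z u v :=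
            fun v _ => mul_nonneg dist_nonneg (hz01 u v).1
          have := (Finset.sum_eq_zero_iff_of_nonneg hall).mp hRu v (Finset.mem_univ v)
          rcases mul_eq_zero.mp this with h | h
          · exact absurd h (ne_of_gt hdvpos)
          · exact h
        rw [hzero]; exact hε0.le
      · have hRupos : 0 < R u := lt_of_le_of_ne (hR0 u) (Ne.symm hRu)
        have h1 : b u * M ≤ R u := by
          rw [hM, Finset.mul_sum]
          calc ∑ v ∈ Finset.univ.filter (fun v => ¬ dist u v ≤ b u), b u * z u v
              ≤ ∑ v ∈ Finset.univ.filter (fun v => ¬ dist u v ≤ b u),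
                  dist u v * z u v := by
                apply Finset.sum_le_sum
                intro v hv
                have := (lt_of_not_ge (Finset.mem_filter.mp hv).2).le
                exact mul_le_mul_of_nonneg_right this (hz01 u v).1
            _ ≤ ∑ v, dist u v * z u v :=
                Finset.sum_le_sum_of_subset_of_nonneg (Finset.filter_subset _ _)
                  (fun v _ _ => mul_nonneg dist_nonneg (hz01 u v).1)
            _ = R u := rfl
        have hbu : b u = R u / ε := rfl
        have hbupos : 0 < b u := by rw [hbu]; positivity
        have : b u * M ≤ b u * ε := by
          rw [hbu]
          calc R u / ε * M ≤ R u := h1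
            _ = R u / ε * ε := by field_simp
        exact le_of_mul_le_mul_left this hbupos
    linarith
  -- pairwise disjoint balls
  have hdisj : (↑S : Set X).PairwiseDisjoint B := by
    intro a ha a' ha' hne
    simp only [Function.onFun]
    rw [Finset.disjoint_left]
    intro v hv hv'
    have h1 : dist a v ≤ b a := (Finset.mem_filter.mp hv).2
    have h2 : dist a' v ≤ b a' := (Finset.mem_filter.mp hv').2
    have h3 : b a + b a' < dist a a' := hsep a ha a' ha' hne
    have h4 : dist a a' ≤ dist a v + dist v a' := dist_triangle a v a'
    rw [dist_comm v a'] at h4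
    linarith
  refine ⟨S, hSne, ?_, ?_⟩
  · -- cardinality bound
    have hsum : (S.card : ℝ) * (1 - ε) ≤ (k : ℝ) := by
      calc (S.card : ℝ) * (1 - ε) = ∑ _u ∈ S, (1 - ε) := by
            rw [Finset.sum_const, nsmul_eq_mul]
        _ ≤ ∑ u ∈ S, ∑ v ∈ B u, y v := by
            apply Finset.sum_le_sum
            intro u _
            exact (hmark u).trans (Finset.sum_le_sum fun v _ => hzy u v)
        _ = ∑ v ∈ S.biUnion B, y v := (Finset.sum_biUnion hdisj).symm
        _ ≤ ∑ v, y v :=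
            Finset.sum_le_sum_of_subset_of_nonneg (Finset.subset_univ _)
              (fun v _ _ => (hy01 v).1)
        _ ≤ (k : ℝ) := hyk
    rw [le_div_iff₀ (by linarith : (0:ℝ) < 1 - ε)]
    exact hsum
  · -- cost bound
    intro i
    have hcardpos : (0:ℝ) < ((Xs i).card : ℝ) := by
      exact_mod_cast Finset.card_pos.mpr (hXne i)
    have hpt : ∀ u ∈ Xs i, S.inf' hSne (fun c => dist u c) ≤ 2 / ε * R u := by
      intro u _
      obtain ⟨a, ha, har, had⟩ := hcov u (Finset.mem_univ u)
      have h1 : S.inf' hSne (fun c => dist u c) ≤ dist u a := Finset.inf'_le _ ha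
      have h2 : b a ≤ b u := by show R a / ε ≤ R u / ε; gcongr
      have hbu : b u = R u / ε := rfl
      have : S.inf' hSne (fun c => dist u c) ≤ 2 * (R u / ε) := by
        calc S.inf' hSne (fun c => dist u c) ≤ dist u a := h1
          _ ≤ b u + b a := had
          _ ≤ b u + b u := by linarith
          _ = 2 * (R u / ε) := by rw [hbu]; ring
      linarith [this, (by ring : 2 * (R u / ε) = 2 / ε * R u)]
    calc (1 / ((Xs i).card : ℝ)) * ∑ u ∈ Xs i, S.inf' hSne (fun c => dist u c)
        ≤ (1 / ((Xs i).card : ℝ)) * ∑ u ∈ Xs i, 2 / ε * R u := by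
          apply mul_le_mul_of_nonneg_left (Finset.sum_le_sum hpt)
          positivity
      _ = 2 / ε * ((1 / ((Xs i).card : ℝ)) * ∑ u ∈ Xs i, R u) := by
          rw [← Finset.mul_sum]; ring
      _ ≤ 2 / ε * lam := by
          apply mul_le_mul_of_nonneg_left (hlam i)
          positivity
      _ = 2 * lam / ε := by ring
end

section
/- Let (X,d) be a finite nonempty metric space, let z_{uv} ∈ [0,1] (u,v ∈ X) satisfy Σ_{v∈X} z_{uv} = 1 for every u, set R_u := Σ_{v∈X} d(u,v) z_{uv}, and let ε > 0. Then there exists a nonempty set S ⊆ X such that: (i) for all distinct u,v ∈ S, d(u,v) > (2/ε)·max{R_u, R_v}; and (ii) for every v ∈ X there exists u ∈ S with d(u,v) ≤ 2R_v/ε (in particular d(v,S) ≤ 2R_v/ε). -/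
open Finset in
private lemma filtering_aux {X : Type*} [MetricSpace X] [Fintype X]
    (R : X → ℝ) (hR0 : ∀ v, 0 ≤ R v) (ε : ℝ) (hε : 0 < ε) :
    ∀ n (T : Finset X), T.card ≤ n → T.Nonempty →
      ∃ S : Finset X, S ⊆ T ∧ S.Nonempty ∧
        (∀ u ∈ S, ∀ v ∈ S, u ≠ v → (2 / ε) * max (R u) (R v) < dist u v) ∧
        (∀ v ∈ T, ∃ u ∈ S, dist u v ≤ 2 * R v / ε) := by
  classical
  intro n
  induction n with
  | zero =>
    intro T hcard hne
    exact absurd (Finset.card_pos.mpr hne) (by omega)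
  | succ n ih =>
    intro T hcard hne
    obtain ⟨u, huT, hmin⟩ := T.exists_min_image R hne
    set T' := T.filter (fun v => 2 * R v / ε < dist u v) with hT'
    have hT'sub : T' ⊆ T := Finset.filter_subset _ _
    have huT' : u ∉ T' := by
      intro h
      have := (Finset.mem_filter.mp h).2
      simp only [dist_self] at this
      have : 2 * R u / ε < 0 := this
      have hnn : 0 ≤ 2 * R u / ε := div_nonneg (by linarith [hR0 u]) hε.le
      linarith
    have hT'card : T'.card ≤ n := by
      have : T'.card < T.card := Finset.card_lt_card ⟨hT'sub, fun h => huT' (h huT)⟩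
      omega
    have key : ∀ v ∈ T, v ∉ T' → dist u v ≤ 2 * R v / ε := by
      intro v hv hv'
      by_contra h
      exact hv' (Finset.mem_filter.mpr ⟨hv, lt_of_not_ge h⟩)
    rcases T'.eq_empty_or_nonempty with he | hT'ne
    · refine ⟨{u}, Finset.singleton_subset_iff.mpr huT, ⟨u, Finset.mem_singleton_self u⟩,
        ?_, ?_⟩
      · intro a ha b hb hab
        rw [Finset.mem_singleton] at ha hb
        exact absurd (ha.trans hb.symm) hab
      · intro v hv
        refine ⟨u, Finset.mem_singleton_self u, key v hv ?_⟩
        rw [he]; exact Finset.notMem_empty v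
    · obtain ⟨S', hS'sub, hS'ne, hS'sep, hS'cov⟩ := ih T' hT'card hT'ne
      refine ⟨insert u S', ?_, ⟨u, Finset.mem_insert_self u S'⟩, ?_, ?_⟩
      · exact Finset.insert_subset huT (hS'sub.trans hT'sub)
      · intro a ha b hb hab
        rcases Finset.mem_insert.mp ha with rfl | ha'
        · rcases Finset.mem_insert.mp hb with rfl | hb'
          · exact absurd rfl hab
          · have hbT' : b ∈ T' := hS'sub hb'
            have hd : 2 * R b / ε < dist a b := (Finset.mem_filter.mp hbT').2
            have hRab : R a ≤ R b := hmin b (hT'sub hbT')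
            rw [max_eq_right hRab]
            calc (2 / ε) * R b = 2 * R b / ε := by ring
              _ < dist a b := hd
        · rcases Finset.mem_insert.mp hb with rfl | hb'
          · have haT' : a ∈ T' := hS'sub ha'
            have hd : 2 * R a / ε < dist b a := (Finset.mem_filter.mp haT').2
            have hRab : R b ≤ R a := hmin a (hT'sub haT')
            rw [max_eq_left hRab, dist_comm]
            calc (2 / ε) * R a = 2 * R a / ε := by ring
              _ < dist b a := hd
          · exact hS'sep a ha' b hb' hab
      · intro v hv
        by_cases hv' : v ∈ T'
        · obtain ⟨w, hw, hwd⟩ := hS'cov v hv'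
          exact ⟨w, Finset.mem_insert_of_mem hw, hwd⟩
        · exact ⟨u, Finset.mem_insert_self u S', key v hv hv'⟩


open Finset

/-- filtering: Given a fractional assignment `z` with unit row sums
on a finite nonempty metric space, with fractional connection costs
`R u = ∑ v, d(u,v) z u v`, and `ε > 0`, there is a nonempty set `S` such that
(i) distinct points of `S` are at distance more than `(2/ε)·max(R u, R v)` from
each other, and (ii) every point `v` has some `u ∈ S` with `d(u,v) ≤ 2 R v / ε`. -/
theorem filtering {X : Type*} [MetricSpace X] [Fintype X] [Nonempty X]
    (z : X → X → ℝ)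
    (hz01 : ∀ u v, 0 ≤ z u v ∧ z u v ≤ 1)
    (hz1 : ∀ u, ∑ v, z u v = 1)
    (R : X → ℝ) (hR : ∀ u, R u = ∑ v, dist u v * z u v)
    (ε : ℝ) (hε : 0 < ε) :
    ∃ S : Finset X, S.Nonempty ∧
      (∀ u ∈ S, ∀ v ∈ S, u ≠ v → (2 / ε) * max (R u) (R v) < dist u v) ∧
      (∀ v : X, ∃ u ∈ S, dist u v ≤ 2 * R v / ε) := by
  have hR0 : ∀ v, 0 ≤ R v := by
    intro v
    rw [hR v]
    exact Finset.sum_nonneg fun w _ => mul_nonneg dist_nonneg (hz01 v w).1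
  obtain ⟨S, _, hSne, hsep, hcov⟩ :=
    filtering_aux R hR0 ε hε (Fintype.card X) Finset.univ (le_of_eq rfl)
      Finset.univ_nonempty
  exact ⟨S, hSne, hsep, fun v => hcov v (Finset.mem_univ v)⟩
end

section
/- Let (X,d) be a finite metric space, let y_v ≥ 0 (v ∈ X) with Σ_{v∈X} y_v ≤ k for a positive integer k, let R_u ≥ 0 for u ∈ X, and let ε ∈ (0,1). Suppose S ⊆ X is a set such that (i) for all distinct u,v ∈ S, d(u,v) > (2/ε)·max{R_u, R_v}, and (ii) for every u ∈ S, Σ_{v∈X : d(u,v) ≤ R_u/ε} y_v ≥ 1−ε. Then the closed balls B(u, R_u/ε) for u ∈ S are pairwise disjoint, and |S| ≤ k/(1−ε). -/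
open Finset

/-- If the points of `S` are pairwise at distance more than
`(2/ε)·max(R u, R v)` from each other and each closed ball `B(u, R u / ε)`
(`u ∈ S`) carries `y`-mass at least `1 - ε`, while the total `y`-mass is at
most `k`, then the balls `B(u, R u / ε)` for `u ∈ S` are pairwise disjoint and
`|S| ≤ k/(1-ε)`. -/
theorem disjoint_balls_card_bound {X : Type*} [MetricSpace X] [Fintype X]
    (y : X → ℝ) (hy0 : ∀ v, 0 ≤ y v)
    (k : ℕ) (hk : 0 < k) (hyk : ∑ v, y v ≤ (k : ℝ))
    (R : X → ℝ) (hR0 : ∀ u, 0 ≤ R u)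
    (ε : ℝ) (hε0 : 0 < ε) (hε1 : ε < 1)
    (S : Finset X)
    (hsep : ∀ u ∈ S, ∀ v ∈ S, u ≠ v → (2 / ε) * max (R u) (R v) < dist u v)
    (hmass : ∀ u ∈ S, 1 - ε ≤ ∑ v ∈ univ.filter (fun v => dist u v ≤ R u / ε), y v) :
    (∀ u ∈ S, ∀ u' ∈ S, u ≠ u' →
      ∀ w : X, ¬(dist u w ≤ R u / ε ∧ dist u' w ≤ R u' / ε)) ∧
    (S.card : ℝ) ≤ k / (1 - ε) := by
  have hdisj : ∀ u ∈ S, ∀ u' ∈ S, u ≠ u' →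
      ∀ w : X, ¬(dist u w ≤ R u / ε ∧ dist u' w ≤ R u' / ε) := by
    intro u hu u' hu' hne w ⟨h1, h2⟩
    have hsep' := hsep u hu u' hu' hne
    have htri : dist u u' ≤ dist u w + dist u' w := by
      calc dist u u' ≤ dist u w + dist w u' := dist_triangle u w u'
        _ = dist u w + dist u' w := by rw [dist_comm w u']
    have hm1 : R u / ε ≤ max (R u) (R u') / ε :=
      by gcongr; exact le_max_left _ _
    have hm2 : R u' / ε ≤ max (R u) (R u') / ε :=
      by gcongr; exact le_max_right _ _
    have heq : (2 / ε) * max (R u) (R u') = max (R u) (R u') / ε + max (R u) (R u') / ε := by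
      field_simp; ring
    linarith
  refine ⟨hdisj, ?_⟩
  -- balls are pairwise disjoint finsets
  set B : X → Finset X := fun u => univ.filter (fun v => dist u v ≤ R u / ε) with hB
  have hpair : (S : Set X).PairwiseDisjoint B := by
    intro u hu u' hu' hne
    simp only [Finset.disjoint_left]
    intro w hw hw'
    simp only [hB, mem_filter] at hw hw'
    exact hdisj u hu u' hu' hne w ⟨hw.2, hw'.2⟩
  have hsum : ∑ u ∈ S, ∑ v ∈ B u, y v ≤ ∑ v, y v := by
    classical
    rw [← Finset.sum_biUnion hpair]
    exact Finset.sum_le_sum_of_subset_of_nonneg (subset_univ _) (fun v _ _ => hy0 v)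
  have hlow : (S.card : ℝ) * (1 - ε) ≤ ∑ u ∈ S, ∑ v ∈ B u, y v := by
    calc (S.card : ℝ) * (1 - ε) = ∑ _u ∈ S, (1 - ε) := by
          rw [Finset.sum_const, nsmul_eq_mul]
      _ ≤ ∑ u ∈ S, ∑ v ∈ B u, y v := Finset.sum_le_sum (fun u hu => hmass u hu)
  have h1ε : 0 < 1 - ε := by linarith
  rw [le_div_iff₀ h1ε]
  calc (S.card : ℝ) * (1 - ε) ≤ ∑ v, y v := hlow.trans hsum
    _ ≤ k := hyk
end

section
/- Let (z,y,λ) be a feasible solution of FairLP-RelError and let ε ∈ (0,1). Then there exists a nonempty set S ⊆ X with |S| ≤ k/(1−ε) such that, for every group i, Σ_{u∈X_i} d(u,S) ≤ (2/ε)·λ·A_i. -/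
open Finset

lemma greedy_aux {X : Type*} [DecidableEq X] (B : X → Finset X) (D : X → ℝ)
    (hB : ∀ u, u ∈ B u) :
    ∀ (n : ℕ) (T : Finset X), T.card ≤ n →
      ∃ S ⊆ T, (∀ s ∈ S, ∀ t ∈ S, s ≠ t → Disjoint (B s) (B t)) ∧
        ∀ u ∈ T, ∃ s ∈ S, D s ≤ D u ∧ ¬ Disjoint (B s) (B u) := by
  classical
  intro n
  induction n with
  | zero =>
      intro T hT
      refine ⟨∅, by simp, by simp, ?_⟩
      intro u hu
      simp [Finset.card_eq_zero.mp (Nat.le_zero.mp hT)] at hu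
  | succ n ih =>
      intro T hT
      rcases T.eq_empty_or_nonempty with rfl | hTne
      · exact ⟨∅, by simp, by simp, by simp⟩
      obtain ⟨u₀, hu₀T, hu₀min⟩ := T.exists_min_image D hTne
      set T' := T.filter (fun u => Disjoint (B u₀) (B u)) with hT'
      have hu₀notT' : u₀ ∉ T' := by
        simp only [hT', Finset.mem_filter]
        rintro ⟨-, hd⟩
        exact (Finset.disjoint_left.mp hd (hB u₀)) (hB u₀)
      have hT'card : T'.card ≤ n := by
        have hss : T' ⊂ T := ⟨Finset.filter_subset _ _, fun h => hu₀notT' (h hu₀T)⟩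
        have := Finset.card_lt_card hss
        omega
      obtain ⟨S', hS'sub, hS'disj, hS'cov⟩ := ih T' hT'card
      refine ⟨insert u₀ S', ?_, ?_, ?_⟩
      · intro x hx
        rcases Finset.mem_insert.mp hx with rfl | hx
        · exact hu₀T
        · exact Finset.filter_subset _ _ (hS'sub hx)
      · have key : ∀ t ∈ S', Disjoint (B u₀) (B t) := fun t ht =>
          (Finset.mem_filter.mp (hS'sub ht)).2
        intro s hs t ht hst
        rcases Finset.mem_insert.mp hs with h1 | h1 <;>
          rcases Finset.mem_insert.mp ht with h2 | h2
        · exact absurd (h1.trans h2.symm) hst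
        · exact h1 ▸ key t h2
        · exact (h2 ▸ key s h1).symm
        · exact hS'disj s h1 t h2 hst
      · intro u hu
        by_cases hd : Disjoint (B u₀) (B u)
        · have huT' : u ∈ T' := Finset.mem_filter.mpr ⟨hu, hd⟩
          obtain ⟨s, hs, h1, h2⟩ := hS'cov u huT'
          exact ⟨s, Finset.mem_insert_of_mem hs, h1, h2⟩
        · exact ⟨u₀, Finset.mem_insert_self _ _, hu₀min u hu, hd⟩

/-- Corollary "ratio": From any feasible solution `(z, y, λ)` of
FairLP-RelError (with parameters `A i ≥ ϑ i`, where `ϑ i > 0` is the optimal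
`k`-median cost of group `X_i`) and any `ε ∈ (0,1)`, one can extract a nonempty
set `S` with `|S| ≤ k/(1-ε)` such that `∑_{u ∈ X_i} d(u,S) ≤ (2/ε)·λ·A i`
for every group `i`. -/
theorem fairLP_relError_bicriteria {X : Type*} [MetricSpace X] [Fintype X]
    {m : ℕ} (hm : 0 < m) (Xs : Fin m → Finset X)
    (hXne : ∀ i, (Xs i).Nonempty)
    (hXdisj : ∀ i j, i ≠ j → Disjoint (Xs i) (Xs j))
    (hXcover : ∀ x : X, ∃ i, x ∈ Xs i)
    (k : ℕ) (hk : 0 < k)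
    (ϑ : Fin m → ℝ) (hϑpos : ∀ i, 0 < ϑ i)
    (hϑlb : ∀ i, ∀ (C : Finset X) (hC : C.Nonempty), C.card ≤ k →
      ϑ i ≤ ∑ u ∈ Xs i, C.inf' hC (fun c => dist u c))
    (hϑach : ∀ i, ∃ (C : Finset X) (hC : C.Nonempty), C.card ≤ k ∧
      ϑ i = ∑ u ∈ Xs i, C.inf' hC (fun c => dist u c))
    (A : Fin m → ℝ) (hA : ∀ i, ϑ i ≤ A i)
    (z : X → X → ℝ) (y : X → ℝ) (lam : ℝ)
    (hz01 : ∀ u v, 0 ≤ z u v ∧ z u v ≤ 1)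
    (hy01 : ∀ v, 0 ≤ y v ∧ y v ≤ 1)
    (hz1 : ∀ u, ∑ v, z u v = 1)
    (hzy : ∀ u v, z u v ≤ y v)
    (hyk : ∑ v, y v ≤ (k : ℝ))
    (hlam : ∀ i, ∑ u ∈ Xs i, ∑ v, dist u v * z u v ≤ lam * A i)
    (ε : ℝ) (hε0 : 0 < ε) (hε1 : ε < 1) :
    ∃ (S : Finset X) (hS : S.Nonempty),
      (S.card : ℝ) ≤ k / (1 - ε) ∧
      ∀ i, ∑ u ∈ Xs i, S.inf' hS (fun c => dist u c) ≤ (2 / ε) * lam * A i := by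
  classical
  set D : X → ℝ := fun u => ∑ v, dist u v * z u v with hDdef
  set B : X → Finset X := fun u => Finset.univ.filter (fun v => dist u v ≤ D u / ε)
    with hBdef
  have hDnn : ∀ u, 0 ≤ D u := fun u =>
    Finset.sum_nonneg fun v _ => mul_nonneg dist_nonneg (hz01 u v).1
  have hrnn : ∀ u, 0 ≤ D u / ε := fun u => div_nonneg (hDnn u) hε0.le
  have hself : ∀ u, u ∈ B u := by
    intro u
    simp only [hBdef, Finset.mem_filter, Finset.mem_univ, true_and, dist_self]
    exact hrnn u
  have hballmem : ∀ u v, v ∈ B u ↔ dist u v ≤ D u / ε := by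
    intro u v; simp [hBdef]
  -- y-mass of each ball is at least 1 - ε
  have hmass : ∀ u, 1 - ε ≤ ∑ v ∈ B u, y v := by
    intro u
    have hsplit : ∑ v ∈ B u, z u v + ∑ v ∈ Finset.univ.filter
        (fun v => ¬ dist u v ≤ D u / ε), z u v = 1 := by
      rw [hBdef]
      rw [Finset.sum_filter_add_sum_filter_not]
      exact hz1 u
    set out := ∑ v ∈ Finset.univ.filter (fun v => ¬ dist u v ≤ D u / ε), z u v with hout
    have houtnn : 0 ≤ out :=
      Finset.sum_nonneg fun v _ => (hz01 u v).1
    have hkey : D u / ε * out ≤ D u := by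
      calc D u / ε * out
          = ∑ v ∈ Finset.univ.filter (fun v => ¬ dist u v ≤ D u / ε),
              D u / ε * z u v := by rw [hout, Finset.mul_sum]
        _ ≤ ∑ v ∈ Finset.univ.filter (fun v => ¬ dist u v ≤ D u / ε),
              dist u v * z u v := by
            refine Finset.sum_le_sum fun v hv => ?_
            have := (Finset.mem_filter.mp hv).2
            exact mul_le_mul_of_nonneg_right (le_of_lt (lt_of_not_ge this)) (hz01 u v).1
        _ ≤ ∑ v, dist u v * z u v := by
            refine Finset.sum_le_sum_of_subset_of_nonneg (Finset.filter_subset _ _) ?_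
            intro v _ _
            exact mul_nonneg dist_nonneg (hz01 u v).1
        _ = D u := rfl
    have houtε : out ≤ ε := by
      rcases eq_or_lt_of_le (hDnn u) with hD0 | hDpos
      · -- D u = 0 : every out term vanishes
        have hzero : ∀ v ∈ Finset.univ.filter (fun v => ¬ dist u v ≤ D u / ε),
            z u v = 0 := by
          intro v hv
          have hvlt : D u / ε < dist u v := lt_of_not_ge (Finset.mem_filter.mp hv).2
          have hterm : dist u v * z u v = 0 := by
            have hsum0 : ∑ v, dist u v * z u v = 0 := hD0.symm
            have hall := (Finset.sum_eq_zero_iff_of_nonneg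
              (fun w (_ : w ∈ (Finset.univ : Finset X)) =>
                mul_nonneg dist_nonneg (hz01 u w).1)).mp hsum0
            exact hall v (Finset.mem_univ v)
          have hdpos : 0 < dist u v := by
            have : 0 ≤ D u / ε := hrnn u
            linarith
          have := mul_eq_zero.mp hterm
          rcases this with h | h
          · exact absurd h (ne_of_gt hdpos)
          · exact h
        rw [hout, Finset.sum_eq_zero hzero] at houtnn ⊢
        linarith
      · -- D u > 0
        have hrpos : 0 < D u / ε := div_pos hDpos hε0
        have h2 : D u / ε * out ≤ D u / ε * ε := by
          rw [div_mul_cancel₀ _ (ne_of_gt hε0)]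
          exact hkey
        exact le_of_mul_le_mul_left h2 hrpos
    have hzB : 1 - ε ≤ ∑ v ∈ B u, z u v := by linarith
    calc 1 - ε ≤ ∑ v ∈ B u, z u v := hzB
      _ ≤ ∑ v ∈ B u, y v := Finset.sum_le_sum fun v _ => hzy u v
  -- greedy selection
  obtain ⟨S, hSsub, hSdisj, hScov⟩ :=
    greedy_aux B D hself (Finset.univ.card) Finset.univ le_rfl
  have hScov' : ∀ u : X, ∃ s ∈ S, D s ≤ D u ∧ ¬ Disjoint (B s) (B u) :=
    fun u => hScov u (Finset.mem_univ u)
  -- S nonempty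
  obtain ⟨x₀, hx₀⟩ := hXne ⟨0, hm⟩
  obtain ⟨s₀, hs₀, -, -⟩ := hScov' x₀
  have hSne : S.Nonempty := ⟨s₀, hs₀⟩
  refine ⟨S, hSne, ?_, ?_⟩
  · -- cardinality bound
    have hdisjSum : ∑ s ∈ S, ∑ v ∈ B s, y v = ∑ v ∈ S.biUnion B, y v := by
      refine (Finset.sum_biUnion ?_).symm
      intro s hs t ht hst
      exact hSdisj s hs t ht hst
    have h1 : (S.card : ℝ) * (1 - ε) ≤ ∑ s ∈ S, ∑ v ∈ B s, y v := by
      calc (S.card : ℝ) * (1 - ε) = ∑ _s ∈ S, (1 - ε) := by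
            rw [Finset.sum_const, nsmul_eq_mul]
        _ ≤ ∑ s ∈ S, ∑ v ∈ B s, y v := Finset.sum_le_sum fun s _ => hmass s
    have h2 : ∑ v ∈ S.biUnion B, y v ≤ ∑ v, y v := by
      refine Finset.sum_le_sum_of_subset_of_nonneg (Finset.subset_univ _) ?_
      intro v _ _; exact (hy01 v).1
    have h3 : (S.card : ℝ) * (1 - ε) ≤ (k : ℝ) := by
      calc (S.card : ℝ) * (1 - ε) ≤ ∑ s ∈ S, ∑ v ∈ B s, y v := h1
        _ = ∑ v ∈ S.biUnion B, y v := hdisjSum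
        _ ≤ ∑ v, y v := h2
        _ ≤ (k : ℝ) := hyk
    rw [le_div_iff₀ (by linarith : (0:ℝ) < 1 - ε)]
    exact h3
  · -- cost bound
    intro i
    have hper : ∀ u : X, S.inf' hSne (fun c => dist u c) ≤ 2 / ε * D u := by
      intro u
      obtain ⟨s, hs, hDs, hnd⟩ := hScov' u
      obtain ⟨w, hwBs, hwBu⟩ := Finset.not_disjoint_iff.mp hnd
      have h1 : dist u w ≤ D u / ε := (hballmem u w).mp hwBu
      have h2 : dist s w ≤ D s / ε := (hballmem s w).mp hwBs
      have h3 : D s / ε ≤ D u / ε := by gcongr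
      have h4 : dist u s ≤ 2 / ε * D u := by
        calc dist u s ≤ dist u w + dist w s := dist_triangle u w s
          _ = dist u w + dist s w := by rw [dist_comm w s]
          _ ≤ D u / ε + D u / ε := add_le_add h1 (h2.trans h3)
          _ = 2 / ε * D u := by ring
      exact (Finset.inf'_le _ hs).trans h4
    calc ∑ u ∈ Xs i, S.inf' hSne (fun c => dist u c)
        ≤ ∑ u ∈ Xs i, 2 / ε * D u := Finset.sum_le_sum fun u _ => hper u
      _ = 2 / ε * ∑ u ∈ Xs i, D u := by rw [Finset.mul_sum]
      _ ≤ 2 / ε * (lam * A i) := by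
          refine mul_le_mul_of_nonneg_left ?_ (by positivity)
          exact hlam i
      _ = 2 / ε * lam * A i := by ring
end

section
/- Let X be a finite set of clients partitioned into m disjoint nonempty groups X_1,…,X_m, let 𝓛 be a finite nonempty set of locations in the same metric space (with distance d), and let f_v ≥ 0 be the opening cost of each v ∈ 𝓛. Let z_{uv} ∈ [0,1] (u ∈ X, v ∈ 𝓛) and y_v ∈ [0,1] satisfy Σ_{v∈𝓛} z_{uv} = 1 for every u and z_{uv} ≤ y_v for all u,v, and suppose (1/|X_i|) Σ_{u∈X_i} Σ_{v∈𝓛} d(u,v) z_{uv} ≤ λ for every group i. Then there exists a nonempty set L ⊆ 𝓛 such that (1/|X_i|) Σ_{u∈X_i} d(u,L) ≤ 4λ for every group i, and Σ_{v∈L} f_v ≤ 4 Σ_{v∈𝓛} y_v f_v. In particular, the fair facility location objective max_i (1/|X_i|) Σ_{u∈X_i} d(u,L) + (1/|X|) Σ_{v∈L} f_v is at most 4 times the optimal value of the corresponding LP relaxation, so fair facility location admits a 4-approximation. -/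
/-! Each client `u` has fractional connection cost `C u = ∑ᵥ d(u,v) z u v`; by Markov's inequality
the ball of radius `4/3 · C u` around `u` carries at least `1/4` of `u`'s assignment, hence at least
`1/4` of `y`. Greedily, by increasing `C`, pick clients whose balls are pairwise disjoint and such
that every client's ball meets the ball of a picked client of no larger cost; open the cheapest
location in each picked ball. Disjointness charges each opened location to `4 ∑ y f` over its own
ball, and a client reaches the location opened for its picked neighbour `s` within
`4/3 · C u + 2 · 4/3 · C s ≤ 4 C u`. -/

open Finset

theorem exists_pairwiseDisjoint_subfamily_meeting_of_le {α β ι : Type*} [LinearOrder ι]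
    (R : α → ι) (B : α → Finset β) (X : Finset α) (hB : ∀ u ∈ X, (B u).Nonempty) :
    ∃ S ⊆ X, (S : Set α).PairwiseDisjoint B ∧
      ∀ u ∈ X, ∃ s ∈ S, R s ≤ R u ∧ ¬Disjoint (B s) (B u) := by
  classical
  induction X using Finset.strongInduction with
  | H X ih =>
    rcases X.eq_empty_or_nonempty with rfl | hX
    · exact ⟨∅, empty_subset _, by simp, by simp⟩
    obtain ⟨u₀, hu₀, hmin⟩ := X.exists_min_image R hX
    have hrest : {u ∈ X | Disjoint (B u₀) (B u)} ⊂ X :=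
      filter_ssubset.2 ⟨u₀, hu₀, by simpa using (hB u₀ hu₀).ne_empty⟩
    obtain ⟨S, hSX, hS, hcover⟩ := ih _ hrest fun u hu => hB u (mem_filter.1 hu).1
    refine ⟨insert u₀ S, insert_subset hu₀ (hSX.trans (filter_subset _ _)), ?_, ?_⟩
    · rw [coe_insert]
      exact hS.insert fun s hs _ => (mem_filter.1 (hSX hs)).2
    · intro u hu
      by_cases hdisj : Disjoint (B u₀) (B u)
      · obtain ⟨s, hs, hRs, hmeet⟩ := hcover u (mem_filter.2 ⟨hu, hdisj⟩)
        exact ⟨s, mem_insert_of_mem hs, hRs, hmeet⟩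
      · exact ⟨u₀, mem_insert_self _ _, hmin u hu, hdisj⟩

theorem markov_mul_sum_filter_le_one {ι : Type*} (s : Finset ι) (d z : ι → ℝ)
    (hd : ∀ v ∈ s, 0 ≤ d v) (hz : ∀ v ∈ s, 0 ≤ z v) (c : ℝ) :
    c * ∑ v ∈ s with c * ∑ w ∈ s, d w * z w < d v, z v ≤ 1 := by
  set E := ∑ w ∈ s, d w * z w
  have hterm : ∀ v ∈ s, 0 ≤ d v * z v := fun v hv => mul_nonneg (hd v hv) (hz v hv)
  obtain hE | hE : 0 = E ∨ 0 < E := (sum_nonneg hterm).eq_or_lt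
  · have hzero : ∀ v ∈ s, d v * z v = 0 := (sum_eq_zero_iff_of_nonneg hterm).1 hE.symm
    rw [sum_eq_zero fun v hv => ?_, mul_zero]
    · exact zero_le_one
    obtain ⟨hvs, hlt⟩ := mem_filter.1 hv
    rw [← hE, mul_zero] at hlt
    exact (mul_eq_zero.1 (hzero v hvs)).resolve_left hlt.ne'
  · suffices c * E * ∑ v ∈ s with c * E < d v, z v ≤ E by
      exact le_of_mul_le_mul_left (by linarith : E * (c * _) ≤ E * 1) hE
    calc c * E * ∑ v ∈ s with c * E < d v, z v
        = ∑ v ∈ s with c * E < d v, c * E * z v := mul_sum _ _ _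
      _ ≤ ∑ v ∈ s with c * E < d v, d v * z v :=
          sum_le_sum fun v hv => mul_le_mul_of_nonneg_right (mem_filter.1 hv).2.le
            (hz v (mem_filter.1 hv).1)
      _ ≤ E := sum_le_sum_of_subset_of_nonneg (filter_subset _ _) fun v hv _ => hterm v hv

theorem mul_sum_image_le_sum_mul_of_pairwiseDisjoint {α β : Type*} [DecidableEq β]
    {S : Finset α} {B : α → Finset β} (hS : (S : Set α).PairwiseDisjoint B) {Ls : Finset β}
    (hBLs : ∀ s ∈ S, B s ⊆ Ls) {f y : β → ℝ} (hf : ∀ v ∈ Ls, 0 ≤ f v) (hy : ∀ v ∈ Ls, 0 ≤ y v)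
    {c : ℝ} (hc : 0 ≤ c) (hmass : ∀ s ∈ S, c ≤ ∑ v ∈ B s, y v) {g : α → β}
    (hg : ∀ s ∈ S, g s ∈ B s) (hgmin : ∀ s ∈ S, ∀ w ∈ B s, f (g s) ≤ f w) :
    c * ∑ v ∈ S.image g, f v ≤ ∑ v ∈ Ls, y v * f v := by
  have hgLs : ∀ s ∈ S, g s ∈ Ls := fun s hs => hBLs s hs (hg s hs)
  have hcharge : ∀ s ∈ S, c * f (g s) ≤ ∑ v ∈ B s, y v * f v := fun s hs =>
    calc c * f (g s) ≤ (∑ v ∈ B s, y v) * f (g s) :=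
          mul_le_mul_of_nonneg_right (hmass s hs) (hf _ (hgLs s hs))
      _ = ∑ v ∈ B s, y v * f (g s) := sum_mul _ _ _
      _ ≤ ∑ v ∈ B s, y v * f v := sum_le_sum fun v hv =>
          mul_le_mul_of_nonneg_left (hgmin s hs v hv) (hy v (hBLs s hs hv))
  calc c * ∑ v ∈ S.image g, f v ≤ c * ∑ s ∈ S, f (g s) :=
        mul_le_mul_of_nonneg_left (sum_image_le_of_nonneg fun v hv => by
          obtain ⟨s, hs, rfl⟩ := mem_image.1 hv
          exact hf _ (hgLs s hs)) hc
    _ = ∑ s ∈ S, c * f (g s) := mul_sum _ _ _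
    _ ≤ ∑ s ∈ S, ∑ v ∈ B s, y v * f v := sum_le_sum hcharge
    _ = ∑ v ∈ S.biUnion B, y v * f v := (sum_biUnion hS).symm
    _ ≤ ∑ v ∈ Ls, y v * f v := sum_le_sum_of_subset_of_nonneg (biUnion_subset.2 hBLs)
        fun v hv _ => mul_nonneg (hy v hv) (hf v hv)

namespace FairFacilityLocation

variable {Ω : Type*} [MetricSpace Ω]

noncomputable def connectionCost (Ls : Finset Ω) (z : Ω → Ω → ℝ) (u : Ω) : ℝ :=
  ∑ v ∈ Ls, dist u v * z u v

noncomputable def connectionBall (Ls : Finset Ω) (z : Ω → Ω → ℝ) (u : Ω) : Finset Ω :=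
  {v ∈ Ls | dist u v ≤ 4 / 3 * connectionCost Ls z u}

theorem mem_connectionBall {Ls : Finset Ω} {z : Ω → Ω → ℝ} {u v : Ω} :
    v ∈ connectionBall Ls z u ↔ v ∈ Ls ∧ dist u v ≤ 4 / 3 * connectionCost Ls z u :=
  mem_filter

theorem one_fourth_le_sum_connectionBall {Ls : Finset Ω} {z : Ω → Ω → ℝ} {u : Ω}
    (hz : ∀ v ∈ Ls, 0 ≤ z u v) (hz1 : ∑ v ∈ Ls, z u v = 1) :
    1 / 4 ≤ ∑ v ∈ connectionBall Ls z u, z u v := by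
  have hfar := markov_mul_sum_filter_le_one Ls (dist u) (z u) (fun _ _ => dist_nonneg) hz (4 / 3)
  have hsplit := sum_filter_add_sum_filter_not Ls
    (fun v => dist u v ≤ 4 / 3 * connectionCost Ls z u) (z u)
  simp only [not_le] at hsplit
  rw [connectionBall, connectionCost] at *
  linarith

theorem exists_rounding (Xc Ls : Finset Ω) (hXc : Xc.Nonempty) (f : Ω → ℝ)
    (hf : ∀ v ∈ Ls, 0 ≤ f v) (z : Ω → Ω → ℝ) (y : Ω → ℝ)
    (hz : ∀ u ∈ Xc, ∀ v ∈ Ls, 0 ≤ z u v) (hy : ∀ v ∈ Ls, 0 ≤ y v)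
    (hz1 : ∀ u ∈ Xc, ∑ v ∈ Ls, z u v = 1) (hzy : ∀ u ∈ Xc, ∀ v ∈ Ls, z u v ≤ y v) :
    ∃ (L : Finset Ω) (hL : L.Nonempty), L ⊆ Ls ∧
      (∀ u ∈ Xc, L.inf' hL (fun v => dist u v) ≤ 4 * connectionCost Ls z u) ∧
      ∑ v ∈ L, f v ≤ 4 * ∑ v ∈ Ls, y v * f v := by
  classical
  set C := connectionCost Ls z
  set B := connectionBall Ls z
  have hBLs : ∀ u, B u ⊆ Ls := fun u => filter_subset _ _
  have hmass : ∀ u ∈ Xc, 1 / 4 ≤ ∑ v ∈ B u, y v := fun u hu =>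
    (one_fourth_le_sum_connectionBall (hz u hu) (hz1 u hu)).trans
      (sum_le_sum fun v hv => hzy u hu v (hBLs u hv))
  have hBne : ∀ u ∈ Xc, (B u).Nonempty := fun u hu =>
    nonempty_of_sum_ne_zero (f := y) (by linarith [hmass u hu])
  obtain ⟨S, hSX, hS, hcover⟩ := exists_pairwiseDisjoint_subfamily_meeting_of_le C B Xc hBne
  choose! g hgB hgmin using fun s hs => (B s).exists_min_image f (hBne s (hSX hs))
  obtain ⟨u₀, hu₀⟩ := hXc
  obtain ⟨s₀, hs₀, -⟩ := hcover u₀ hu₀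
  refine ⟨S.image g, ⟨g s₀, mem_image_of_mem g hs₀⟩,
    image_subset_iff.2 fun s hs => hBLs s (hgB s hs), fun u hu => ?_, ?_⟩
  · obtain ⟨s, hs, hCs, hmeet⟩ := hcover u hu
    obtain ⟨w, hws, hwu⟩ := not_disjoint_iff.1 hmeet
    have hsw := (mem_connectionBall.1 hws).2
    have huw := (mem_connectionBall.1 hwu).2
    have hsg := (mem_connectionBall.1 (hgB s hs)).2
    calc (S.image g).inf' _ (fun v => dist u v) ≤ dist u (g s) :=
          inf'_le _ (mem_image_of_mem g hs)
      _ ≤ dist u w + dist s w + dist s (g s) := by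
          rw [dist_comm s w]; exact dist_triangle4 u w s (g s)
      _ ≤ 4 * C u := by linarith
  · have hcost := mul_sum_image_le_sum_mul_of_pairwiseDisjoint hS (fun s _ => hBLs s) hf hy
      (by norm_num) (fun s hs => hmass s (hSX hs)) hgB hgmin
    linarith

end FairFacilityLocation

open FairFacilityLocation

theorem fair_facility_location_four_approx_general {Ω : Type*} [MetricSpace Ω]
    (Xc : Finset Ω) (Ls : Finset Ω)
    {m : ℕ} (hm : 0 < m) (Xs : Fin m → Finset Ω)
    (hXne : ∀ i, (Xs i).Nonempty)
    (hXsub : ∀ i, Xs i ⊆ Xc)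
    (f : Ω → ℝ) (hf : ∀ v ∈ Ls, 0 ≤ f v)
    (z : Ω → Ω → ℝ) (y : Ω → ℝ) (lam : ℝ)
    (hz01 : ∀ u ∈ Xc, ∀ v ∈ Ls, 0 ≤ z u v ∧ z u v ≤ 1)
    (hy01 : ∀ v ∈ Ls, 0 ≤ y v ∧ y v ≤ 1)
    (hz1 : ∀ u ∈ Xc, ∑ v ∈ Ls, z u v = 1)
    (hzy : ∀ u ∈ Xc, ∀ v ∈ Ls, z u v ≤ y v)
    (hlam : ∀ i, (1 / ((Xs i).card : ℝ)) * ∑ u ∈ Xs i, ∑ v ∈ Ls, dist u v * z u v ≤ lam) :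
    ∃ (L : Finset Ω) (hL : L.Nonempty), L ⊆ Ls ∧
      (∀ i, (1 / ((Xs i).card : ℝ)) * ∑ u ∈ Xs i, L.inf' hL (fun v => dist u v)
        ≤ 4 * lam) ∧
      (∑ v ∈ L, f v ≤ 4 * ∑ v ∈ Ls, y v * f v) ∧
      (univ.sup' (univ_nonempty_iff.mpr ⟨⟨0, hm⟩⟩)
          (fun i => (1 / ((Xs i).card : ℝ)) *
            ∑ u ∈ Xs i, L.inf' hL (fun v => dist u v))
        + (1 / (Xc.card : ℝ)) * ∑ v ∈ L, f v
        ≤ 4 * (lam + (1 / (Xc.card : ℝ)) * ∑ v ∈ Ls, y v * f v)) := by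
  obtain ⟨L, hL, hLLs, hdist, hcost⟩ :=
    exists_rounding Xc Ls ((hXne ⟨0, hm⟩).mono (hXsub _)) f hf z y (fun u hu v hv => (hz01 u hu v hv).1) (fun v hv => (hy01 v hv).1) hz1 hzy
  have hgroup (i : Fin m) : (1 / ((Xs i).card : ℝ)) *
      ∑ u ∈ Xs i, L.inf' hL (fun v => dist u v) ≤ 4 * lam := by
    have hsum : ∑ u ∈ Xs i, L.inf' hL (fun v => dist u v)
        ≤ 4 * ∑ u ∈ Xs i, connectionCost Ls z u := by
      rw [mul_sum]; exact sum_le_sum fun u hu => hdist u (hXsub i hu)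
    calc _ ≤ (1 / ((Xs i).card : ℝ)) * (4 * ∑ u ∈ Xs i, connectionCost Ls z u) := by gcongr
      _ = 4 * ((1 / ((Xs i).card : ℝ)) * ∑ u ∈ Xs i, connectionCost Ls z u) := by ring
      _ ≤ 4 * lam := by gcongr; exact hlam i
  refine ⟨L, hL, hLLs, hgroup, hcost, ?_⟩
  have hmax := sup'_le (univ_nonempty_iff.mpr ⟨⟨0, hm⟩⟩) _ fun i _ => hgroup i
  have hopen : (1 / (Xc.card : ℝ)) * ∑ v ∈ L, f v
      ≤ (1 / (Xc.card : ℝ)) * (4 * ∑ v ∈ Ls, y v * f v) := by gcongr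
  linarith

/-- Theorem "facility": Given a fractional solution `(z, y, λ)` of
the fair facility location LP (clients `Xc` partitioned into groups `Xs i`,
locations `Ls` with opening costs `f`), there is a nonempty `L ⊆ Ls` whose
per-group average connection cost is at most `4λ` and whose total opening cost
is at most `4 ∑_{v ∈ Ls} y v · f v`. In particular the fair facility location
objective of `L` is at most `4` times the LP objective, so fair facility
location admits a `4`-approximation. -/
theorem fair_facility_location_four_approx {Ω : Type*} [MetricSpace Ω]
    (Xc : Finset Ω) (Ls : Finset Ω) (hLs : Ls.Nonempty)
    {m : ℕ} (hm : 0 < m) (Xs : Fin m → Finset Ω)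
    (hXne : ∀ i, (Xs i).Nonempty)
    (hXdisj : ∀ i j, i ≠ j → Disjoint (Xs i) (Xs j))
    (hXsub : ∀ i, Xs i ⊆ Xc)
    (hXcover : ∀ x ∈ Xc, ∃ i, x ∈ Xs i)
    (f : Ω → ℝ) (hf : ∀ v ∈ Ls, 0 ≤ f v)
    (z : Ω → Ω → ℝ) (y : Ω → ℝ) (lam : ℝ)
    (hz01 : ∀ u ∈ Xc, ∀ v ∈ Ls, 0 ≤ z u v ∧ z u v ≤ 1)
    (hy01 : ∀ v ∈ Ls, 0 ≤ y v ∧ y v ≤ 1)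
    (hz1 : ∀ u ∈ Xc, ∑ v ∈ Ls, z u v = 1)
    (hzy : ∀ u ∈ Xc, ∀ v ∈ Ls, z u v ≤ y v)
    (hlam : ∀ i, (1 / ((Xs i).card : ℝ)) * ∑ u ∈ Xs i, ∑ v ∈ Ls, dist u v * z u v ≤ lam) :
    ∃ (L : Finset Ω) (hL : L.Nonempty), L ⊆ Ls ∧
      (∀ i, (1 / ((Xs i).card : ℝ)) * ∑ u ∈ Xs i, L.inf' hL (fun v => dist u v)
        ≤ 4 * lam) ∧
      (∑ v ∈ L, f v ≤ 4 * ∑ v ∈ Ls, y v * f v) ∧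
      (univ.sup' (univ_nonempty_iff.mpr ⟨⟨0, hm⟩⟩)
          (fun i => (1 / ((Xs i).card : ℝ)) *
            ∑ u ∈ Xs i, L.inf' hL (fun v => dist u v))
        + (1 / (Xc.card : ℝ)) * ∑ v ∈ L, f v
        ≤ 4 * (lam + (1 / (Xc.card : ℝ)) * ∑ v ∈ Ls, y v * f v)) :=
  fair_facility_location_four_approx_general Xc Ls hm Xs hXne hXsub f hf z y lam hz01 hy01 hz1 hzy
    hlam
end

section
/- Let X be a finite set of clients and 𝓛 a finite set of locations in a metric space with distance d, let f_v ≥ 0 for v ∈ 𝓛, let U > 0, and let θ ∈ (0,1). Suppose z_{uv} ∈ [0,1] (u ∈ X, v ∈ 𝓛) and y_v ∈ [0,1] satisfy Σ_{v∈𝓛} z_{uv} = 1 for every u, z_{uv} ≤ y_v for all u,v, and Σ_{u∈X} z_{uv} ≤ U·y_v for every v. Set R_u := Σ_{v∈𝓛} d(u,v) z_{uv}. Then there exist z'_{uv} ∈ [0,1] and y'_v ∈ [0,1] such that: (i) Σ_{v∈𝓛} z'_{uv} = 1 for every u; (ii) z'_{uv} ≤ y'_v for all u,v; (iii) z'_{uv}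 > 0 implies d(u,v) ≤ R_u/θ; (iv) Σ_{u∈X} z'_{uv} ≤ (U/(1−θ))·y'_v for every v; and (v) Σ_{v∈𝓛} f_v y'_v ≤ (1/(1−θ)) Σ_{v∈𝓛} f_v y_v. -/
open Finset

/-- filtering for the capacitated facility location LP: Given a
fractional solution `(z, y)` satisfying unit demands, `z ≤ y`, and capacity
constraints `∑_u z u v ≤ U · y v`, with fractional connection costs
`R u = ∑_{v ∈ Ls} d(u,v) z u v` and `θ ∈ (0,1)`, there is a filtered fractional
solution `(z', y')` that only assigns clients within distance `R u / θ`,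
satisfies the capacity constraint with a `1/(1-θ)` slack, and whose opening
cost is at most `1/(1-θ)` times that of `y`. -/
theorem capacitated_filtering {Ω : Type*} [MetricSpace Ω]
    (Xc : Finset Ω) (Ls : Finset Ω)
    (f : Ω → ℝ) (hf : ∀ v ∈ Ls, 0 ≤ f v)
    (U : ℝ) (hU : 0 < U)
    (θ : ℝ) (hθ0 : 0 < θ) (hθ1 : θ < 1)
    (z : Ω → Ω → ℝ) (y : Ω → ℝ)
    (hz01 : ∀ u ∈ Xc, ∀ v ∈ Ls, 0 ≤ z u v ∧ z u v ≤ 1)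
    (hy01 : ∀ v ∈ Ls, 0 ≤ y v ∧ y v ≤ 1)
    (hz1 : ∀ u ∈ Xc, ∑ v ∈ Ls, z u v = 1)
    (hzy : ∀ u ∈ Xc, ∀ v ∈ Ls, z u v ≤ y v)
    (hcap : ∀ v ∈ Ls, ∑ u ∈ Xc, z u v ≤ U * y v)
    (R : Ω → ℝ) (hR : ∀ u, R u = ∑ v ∈ Ls, dist u v * z u v) :
    ∃ (z' : Ω → Ω → ℝ) (y' : Ω → ℝ),
      (∀ u ∈ Xc, ∀ v ∈ Ls, 0 ≤ z' u v ∧ z' u v ≤ 1) ∧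
      (∀ v ∈ Ls, 0 ≤ y' v ∧ y' v ≤ 1) ∧
      (∀ u ∈ Xc, ∑ v ∈ Ls, z' u v = 1) ∧
      (∀ u ∈ Xc, ∀ v ∈ Ls, z' u v ≤ y' v) ∧
      (∀ u ∈ Xc, ∀ v ∈ Ls, 0 < z' u v → dist u v ≤ R u / θ) ∧
      (∀ v ∈ Ls, ∑ u ∈ Xc, z' u v ≤ (U / (1 - θ)) * y' v) ∧
      (∑ v ∈ Ls, f v * y' v ≤ (1 / (1 - θ)) * ∑ v ∈ Ls, f v * y v) := by

  have h1θ : (0:ℝ) < 1 - θ := by linarith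
  classical
  set B : Ω → Finset Ω := fun u => Ls.filter (fun v => dist u v ≤ R u / θ) with hB
  set s : Ω → ℝ := fun u => ∑ v ∈ B u, z u v with hs
  have hsge : ∀ u ∈ Xc, 1 - θ ≤ s u := by
    intro u hu
    have hsplit : s u + ∑ v ∈ Ls.filter (fun v => ¬ dist u v ≤ R u / θ), z u v
        = 1 := by
      rw [hs, hB]
      simpa using (Finset.sum_filter_add_sum_filter_not Ls
        (fun v => dist u v ≤ R u / θ) (z u)).trans (hz1 u hu)
    have hRnn : 0 ≤ R u := by
      rw [hR]
      exact Finset.sum_nonneg fun v hv =>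
        mul_nonneg dist_nonneg (hz01 u hu v hv).1
    have hout : ∑ v ∈ Ls.filter (fun v => ¬ dist u v ≤ R u / θ), z u v ≤ θ := by
      rcases eq_or_lt_of_le hRnn with hR0 | hRpos
      · have : ∀ v ∈ Ls.filter (fun v => ¬ dist u v ≤ R u / θ), z u v = 0 := by
          intro v hv
          rw [Finset.mem_filter] at hv
          have hsum0 : ∑ v ∈ Ls, dist u v * z u v = 0 := by rw [← hR, ← hR0]
          have hterm : dist u v * z u v = 0 := by
            have := (Finset.sum_eq_zero_iff_of_nonneg (fun v hv =>
              mul_nonneg dist_nonneg (hz01 u hu v hv).1)).mp hsum0 v hv.1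
            exact this
          have hd : 0 < dist u v := by
            by_contra hd
            push_neg at hd
            exact hv.2 (le_trans hd (by positivity))
          exact (mul_eq_zero.mp hterm).resolve_left (ne_of_gt hd)
        calc ∑ v ∈ Ls.filter (fun v => ¬ dist u v ≤ R u / θ), z u v
            = 0 := Finset.sum_eq_zero this
          _ ≤ θ := le_of_lt hθ0
      · have hq : 0 < R u / θ := div_pos hRpos hθ0
        have h1 : (R u / θ) * ∑ v ∈ Ls.filter (fun v => ¬ dist u v ≤ R u / θ), z u v
            ≤ ∑ v ∈ Ls.filter (fun v => ¬ dist u v ≤ R u / θ), dist u v * z u v := by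
          rw [Finset.mul_sum]
          apply Finset.sum_le_sum
          intro v hv
          rw [Finset.mem_filter] at hv
          exact mul_le_mul_of_nonneg_right (le_of_lt (lt_of_not_ge hv.2))
            (hz01 u hu v hv.1).1
        have h2 : ∑ v ∈ Ls.filter (fun v => ¬ dist u v ≤ R u / θ), dist u v * z u v
            ≤ R u := by
          rw [hR]
          apply Finset.sum_le_sum_of_subset_of_nonneg (Finset.filter_subset _ _)
          intro v hv _
          exact mul_nonneg dist_nonneg (hz01 u hu v hv).1
        have h3 : (R u / θ) * ∑ v ∈ Ls.filter (fun v => ¬ dist u v ≤ R u / θ), z u v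
            ≤ (R u / θ) * θ := by
          rw [div_mul_cancel₀ _ (ne_of_gt hθ0)]
          exact le_trans h1 h2
        exact le_of_mul_le_mul_left h3 hq
    linarith
  have hspos : ∀ u ∈ Xc, 0 < s u := fun u hu => lt_of_lt_of_le h1θ (hsge u hu)
  refine ⟨fun u v => if v ∈ B u then z u v / s u else 0,
    fun v => min 1 (y v / (1 - θ)), ?_, ?_, ?_, ?_, ?_, ?_, ?_⟩
  · intro u hu v hv
    constructor
    · by_cases h : v ∈ B u
      · simp only [h, if_true]
        exact div_nonneg (hz01 u hu v hv).1 (le_of_lt (hspos u hu))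
      · simp [h]
    · by_cases h : v ∈ B u
      · simp only [h, if_true]
        rw [div_le_one (hspos u hu)]
        exact Finset.single_le_sum (fun w hw =>
          (hz01 u hu w (Finset.filter_subset _ _ hw)).1) h
      · simp [h]
  · intro v hv
    refine ⟨le_min zero_le_one (div_nonneg (hy01 v hv).1 (le_of_lt h1θ)), min_le_left _ _⟩
  · intro u hu
    rw [← Finset.sum_filter]
    have hfe : Ls.filter (fun a => a ∈ B u) = B u := by
      ext w; simp only [hB, Finset.mem_filter]; tauto
    rw [hfe, ← Finset.sum_div]
    exact div_self (ne_of_gt (hspos u hu))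
  · intro u hu v hv
    by_cases h : v ∈ B u
    · simp only [h, if_true]
      apply le_min
      · rw [div_le_one (hspos u hu)]
        exact Finset.single_le_sum (fun w hw =>
          (hz01 u hu w (Finset.filter_subset _ _ hw)).1) h
      · calc z u v / s u ≤ z u v / (1 - θ) :=
              div_le_div_of_nonneg_left (hz01 u hu v hv).1 h1θ (hsge u hu)
          _ ≤ y v / (1 - θ) := by gcongr; exact hzy u hu v hv
    · simp only [h, if_false]
      exact le_min zero_le_one (div_nonneg (hy01 v hv).1 (le_of_lt h1θ))
  · intro u hu v hv hpos
    by_cases h : v ∈ B u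
    · rw [hB, Finset.mem_filter] at h
      exact h.2
    · simp [h] at hpos
  · intro v hv
    have hle : ∑ u ∈ Xc, (if v ∈ B u then z u v / s u else 0)
        ≤ ∑ u ∈ Xc, z u v / (1 - θ) := by
      apply Finset.sum_le_sum
      intro u hu
      by_cases h : v ∈ B u
      · simp only [h, if_true]
        exact div_le_div_of_nonneg_left (hz01 u hu v hv).1 h1θ (hsge u hu)
      · simp only [h, if_false]
        exact div_nonneg (hz01 u hu v hv).1 (le_of_lt h1θ)
    have hyy' : y v ≤ min 1 (y v / (1 - θ)) := by
      apply le_min (hy01 v hv).2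
      rw [le_div_iff₀ h1θ]
      nlinarith [(hy01 v hv).1]
    calc ∑ u ∈ Xc, (if v ∈ B u then z u v / s u else 0)
        ≤ ∑ u ∈ Xc, z u v / (1 - θ) := hle
      _ = (∑ u ∈ Xc, z u v) / (1 - θ) := by rw [Finset.sum_div]
      _ ≤ (U * y v) / (1 - θ) := by gcongr; exact hcap v hv
      _ = (U / (1 - θ)) * y v := by ring
      _ ≤ (U / (1 - θ)) * min 1 (y v / (1 - θ)) := by
          apply mul_le_mul_of_nonneg_left hyy'
          positivity
  · rw [Finset.mul_sum]
    apply Finset.sum_le_sum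
    intro v hv
    calc f v * min 1 (y v / (1 - θ)) ≤ f v * (y v / (1 - θ)) :=
          mul_le_mul_of_nonneg_left (min_le_right _ _) (hf v hv)
      _ = 1 / (1 - θ) * (f v * y v) := by ring
end

section
/- Let X be a finite set of clients partitioned into m disjoint nonempty groups X_1,…,X_m, let 𝓛 be a finite nonempty set of locations in the same metric space with distance d, let f_v ≥ 0 for v ∈ 𝓛, and let U > 0. Suppose z_{uv} ∈ [0,1] and y_v ∈ [0,1] satisfy Σ_{v∈𝓛} z_{uv} = 1 for every u, z_{uv} ≤ y_v, Σ_{u∈X} z_{uv} ≤ U·y_v for every v, and (1/|X_i|) Σ_{u∈X_i} Σ_{v∈𝓛} d(u,v) z_{uv} ≤ λ for every group i. Then for all θ, δ ∈ (0,1/2) there exist a nonempty set L ⊆ 𝓛 and a function g : X → L such that: (i) for every group i, (1/|X_i|) Σ_{u∈X_i} d(u,g(u)) ≤ (3/θ)·(1/(1−δ))·λ; (ii) Σ_{v∈L} f_v ≤ (2/(δ(1−θ))) Σ_{v∈𝓛} f_v y_v; and (iii) |g^{-1}(v)| ≤ ⌈U/((1−θ)(1−δ))⌉ for every v ∈ L.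 In particular, choosing θ = δ = ε/3 yields a solution whose objective is a constant (depending only on ε) factor of the LP value and whose loads are at most (1+ε)U up to rounding. -/
open Finset

private lemma carve_small {Ω : Type*} [DecidableEq Ω] (y : Ω → ℝ) (ε : ℝ) (hε : 0 < ε) :
    ∀ F : Finset Ω, (∀ w ∈ F, y w < ε) → ε ≤ ∑ w ∈ F, y w →
      ∃ S, S ⊆ F ∧ ε ≤ ∑ w ∈ S, y w ∧ ∑ w ∈ S, y w < 2 * ε := by
  intro F
  induction F using Finset.strongInduction with
  | _ F ih =>
    intro hsmall hmass
    have hFne : F.Nonempty := by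
      rcases F.eq_empty_or_nonempty with h | h
      · exfalso; rw [h] at hmass; simp at hmass; linarith
      · exact h
    obtain ⟨a, ha⟩ := hFne
    by_cases h : ε ≤ ∑ w ∈ F.erase a, y w
    · obtain ⟨S, hS1, hS2, hS3⟩ := ih (F.erase a) (Finset.erase_ssubset ha)
        (fun w hw => hsmall w (Finset.mem_of_mem_erase hw)) h
      exact ⟨S, hS1.trans (Finset.erase_subset _ _), hS2, hS3⟩
    · refine ⟨F, Finset.Subset.refl _, hmass, ?_⟩
      have h2 := Finset.sum_erase_add F y ha
      push_neg at h
      have h3 := hsmall a ha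
      linarith

private lemma partition_exists {Ω : Type*} [DecidableEq Ω] (y : Ω → ℝ) (ε : ℝ)
    (hε : 0 < ε) (hε2 : ε ≤ 1/2) :
    ∀ F : Finset Ω, (∀ w ∈ F, 0 ≤ y w ∧ y w ≤ 1) → ε ≤ ∑ w ∈ F, y w →
      ∃ Ps : Finset (Finset Ω),
        (∀ P ∈ Ps, P ⊆ F ∧ ε ≤ ∑ w ∈ P, y w ∧ ∑ w ∈ P, y w ≤ 1 + ε) ∧
        (∀ P ∈ Ps, ∀ Q ∈ Ps, P ≠ Q → Disjoint P Q) ∧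
        F = Ps.biUnion id := by
  intro F
  induction F using Finset.strongInduction with
  | _ F ih =>
    intro hy01 hmass
    by_cases hM : ∑ w ∈ F, y w ≤ 1 + ε
    · refine ⟨{F}, ?_, ?_, ?_⟩
      · intro P hP; rw [Finset.mem_singleton] at hP; subst hP
        exact ⟨Finset.Subset.refl _, hmass, hM⟩
      · intro P hP Q hQ hne; rw [Finset.mem_singleton] at hP hQ
        subst hP; subst hQ; exact absurd rfl hne
      · simp
    · push_neg at hM
      -- carve a part S with good mass bounds and enough remaining mass
      have hcarve : ∃ S, S ⊆ F ∧ S.Nonempty ∧ ε ≤ ∑ w ∈ S, y w ∧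
          ∑ w ∈ S, y w ≤ 1 + ε ∧ ε ≤ ∑ w ∈ F \ S, y w := by
        by_cases hbig : ∃ a ∈ F, ε ≤ y a
        · obtain ⟨a, ha, hay⟩ := hbig
          have hrest : ∑ w ∈ F \ {a}, y w + ∑ w ∈ {a}, y w = ∑ w ∈ F, y w :=
            Finset.sum_sdiff (Finset.singleton_subset_iff.mpr ha)
          have hsing : ∑ w ∈ ({a} : Finset Ω), y w = y a := Finset.sum_singleton _ _
          have hya1 : y a ≤ 1 := (hy01 a ha).2
          refine ⟨{a}, Finset.singleton_subset_iff.mpr ha, ⟨a, Finset.mem_singleton_self a⟩,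
            ?_, ?_, ?_⟩
          · rw [hsing]; linarith
          · rw [hsing]; linarith
          · linarith [hrest, hsing]
        · push_neg at hbig
          obtain ⟨S, hS1, hS2, hS3⟩ := carve_small y ε hε F hbig hmass
          have hSne : S.Nonempty := by
            rcases S.eq_empty_or_nonempty with h | h
            · exfalso; rw [h] at hS2; simp at hS2; linarith
            · exact h
          have hrest : ∑ w ∈ F \ S, y w + ∑ w ∈ S, y w = ∑ w ∈ F, y w := Finset.sum_sdiff hS1
          exact ⟨S, hS1, hSne, hS2, by linarith, by linarith⟩
      obtain ⟨S, hSF, hSne, hSlo, hShi, hrestlo⟩ := hcarve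
      have hss : F \ S ⊂ F := by
        obtain ⟨a, haS⟩ := hSne
        refine Finset.ssubset_iff_of_subset (Finset.sdiff_subset) |>.mpr ⟨a, hSF haS, by simp [haS]⟩
      obtain ⟨Ps', hPs'1, hPs'2, hPs'3⟩ := ih (F \ S) hss
        (fun w hw => hy01 w (Finset.sdiff_subset hw)) hrestlo
      refine ⟨insert S Ps', ?_, ?_, ?_⟩
      · intro P hP
        rcases Finset.mem_insert.mp hP with h | h
        · subst h; exact ⟨hSF, hSlo, hShi⟩
        · obtain ⟨h1, h2, h3⟩ := hPs'1 P h
          exact ⟨h1.trans Finset.sdiff_subset, h2, h3⟩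
      · intro P hP Q hQ hne
        rcases Finset.mem_insert.mp hP with h | h <;> rcases Finset.mem_insert.mp hQ with h' | h'
        · subst h; subst h'; exact absurd rfl hne
        · subst h; exact Finset.disjoint_sdiff.mono_right (hPs'1 Q h').1
        · subst h'; exact (Finset.disjoint_sdiff.mono_right (hPs'1 P h).1).symm
        · exact hPs'2 P h Q h' hne
      · rw [Finset.biUnion_insert]
        have : Ps'.biUnion id = F \ S := hPs'3.symm
        rw [this, id]
        exact (Finset.union_sdiff_of_subset hSF).symm

private lemma claims_exists {Ω : Type*} [DecidableEq Ω] (y R : Ω → ℝ) (B : Ω → Finset Ω)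
    (ε : ℝ) (hε : 0 < ε) :
    ∀ X : Finset Ω, ∀ Free : Finset Ω, (∀ w ∈ Free, 0 ≤ y w) →
      ∃ (O : Finset Ω) (Cl : Ω → Finset Ω),
        O ⊆ X ∧
        (∀ o ∈ O, Cl o ⊆ B o ∩ Free ∧ ε ≤ ∑ w ∈ Cl o, y w) ∧
        (∀ o ∈ O, ∀ o' ∈ O, o ≠ o' → Disjoint (Cl o) (Cl o')) ∧
        (∀ u ∈ X, ∑ w ∈ (B u ∩ Free) \ (O.filter fun o => R o ≤ R u).biUnion Cl, y w ≤ ε) := by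
  intro X
  induction X using Finset.strongInduction with
  | _ X ih =>
    intro Free hyF
    rcases X.eq_empty_or_nonempty with hXe | hXne
    · subst hXe; exact ⟨∅, fun _ => ∅, by simp, by simp, by simp, by simp⟩
    · obtain ⟨u0, hu0X, hu0min⟩ := X.exists_min_image R hXne
      by_cases hcl : ε ≤ ∑ w ∈ B u0 ∩ Free, y w
      · -- u0 claims B u0 ∩ Free
        obtain ⟨O', Cl', hO'sub, hCl'prop, hCl'disj, hres'⟩ :=
          ih (X.erase u0) (Finset.erase_ssubset hu0X) (Free \ (B u0 ∩ Free))
            (fun w hw => hyF w (Finset.mem_sdiff.mp hw).1)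
        refine ⟨insert u0 O', fun o => if o = u0 then B u0 ∩ Free else Cl' o, ?_, ?_, ?_, ?_⟩
        · intro o ho
          rcases Finset.mem_insert.mp ho with h | h
          · subst h; exact hu0X
          · exact Finset.erase_subset _ _ (hO'sub h)
        · intro o ho
          dsimp only
          rcases Finset.mem_insert.mp ho with h | h
          · rw [if_pos h, h]; exact ⟨Finset.Subset.refl _, hcl⟩
          · have hne : o ≠ u0 := Finset.ne_of_mem_erase (hO'sub h)
            rw [if_neg hne]
            obtain ⟨h1, h2⟩ := hCl'prop o h
            exact ⟨h1.trans (Finset.inter_subset_inter_left Finset.sdiff_subset), h2⟩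
        · intro o ho o' ho' hne
          dsimp only
          rcases Finset.mem_insert.mp ho with h | h <;> rcases Finset.mem_insert.mp ho' with h' | h'
          · exact absurd (h.trans h'.symm) hne
          · have hne' : o' ≠ u0 := Finset.ne_of_mem_erase (hO'sub h')
            rw [if_pos h, if_neg hne']
            have hss : Cl' o' ⊆ Free \ (B u0 ∩ Free) :=
              (hCl'prop o' h').1.trans Finset.inter_subset_right
            exact (Finset.sdiff_disjoint.mono_left hss).symm
          · have hne' : o ≠ u0 := Finset.ne_of_mem_erase (hO'sub h)
            rw [if_neg hne', if_pos h']
            have hss : Cl' o ⊆ Free \ (B u0 ∩ Free) :=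
              (hCl'prop o h).1.trans Finset.inter_subset_right
            exact Finset.sdiff_disjoint.mono_left hss
          · have hne1 : o ≠ u0 := Finset.ne_of_mem_erase (hO'sub h)
            have hne2 : o' ≠ u0 := Finset.ne_of_mem_erase (hO'sub h')
            rw [if_neg hne1, if_neg hne2]
            exact hCl'disj o h o' h' hne
        · intro u huX
          by_cases hu : u = u0
          · rw [hu]
            have hmem : u0 ∈ (insert u0 O').filter (fun o => R o ≤ R u0) :=
              Finset.mem_filter.mpr ⟨Finset.mem_insert_self _ _, le_refl _⟩
            have hsub : (B u0 ∩ Free) ⊆ ((insert u0 O').filter fun o => R o ≤ R u0).biUnion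
                (fun o => if o = u0 then B u0 ∩ Free else Cl' o) := by
              intro x hx
              exact Finset.mem_biUnion.mpr ⟨u0, hmem, by rw [if_pos rfl]; exact hx⟩
            rw [Finset.sdiff_eq_empty_iff_subset.mpr hsub, Finset.sum_empty]
            exact hε.le
          · have huE : u ∈ X.erase u0 := Finset.mem_erase.mpr ⟨hu, huX⟩
            have hres := hres' u huE
            refine le_trans (Finset.sum_le_sum_of_subset_of_nonneg ?_ ?_) hres
            · intro x hx
              obtain ⟨hx1, hx2⟩ := Finset.mem_sdiff.mp hx
              obtain ⟨hxB, hxF⟩ := Finset.mem_inter.mp hx1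
              have hu0f : u0 ∈ (insert u0 O').filter (fun o => R o ≤ R u) :=
                Finset.mem_filter.mpr ⟨Finset.mem_insert_self _ _, hu0min u huX⟩
              have hxnF0 : x ∉ B u0 ∩ Free := by
                intro hxF0
                exact hx2 (Finset.mem_biUnion.mpr ⟨u0, hu0f, by rw [if_pos rfl]; exact hxF0⟩)
              refine Finset.mem_sdiff.mpr ⟨Finset.mem_inter.mpr
                ⟨hxB, Finset.mem_sdiff.mpr ⟨hxF, hxnF0⟩⟩, ?_⟩
              intro hxbi
              obtain ⟨o, hof, hxo⟩ := Finset.mem_biUnion.mp hxbi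
              obtain ⟨hoO', hoR⟩ := Finset.mem_filter.mp hof
              have hneo : o ≠ u0 := Finset.ne_of_mem_erase (hO'sub hoO')
              exact hx2 (Finset.mem_biUnion.mpr ⟨o, Finset.mem_filter.mpr
                ⟨Finset.mem_insert_of_mem hoO', hoR⟩, by rw [if_neg hneo]; exact hxo⟩)
            · intro w hw _
              have hwf : w ∈ Free \ (B u0 ∩ Free) :=
                (Finset.mem_inter.mp (Finset.mem_sdiff.mp hw).1).2
              exact hyF w (Finset.mem_sdiff.mp hwf).1
      · -- u0 claims nothing
        obtain ⟨O', Cl', hO'sub, hCl'prop, hCl'disj, hres'⟩ :=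
          ih (X.erase u0) (Finset.erase_ssubset hu0X) Free hyF
        push_neg at hcl
        refine ⟨O', Cl', hO'sub.trans (Finset.erase_subset _ _), hCl'prop, hCl'disj, ?_⟩
        intro u huX
        by_cases hu : u = u0
        · rw [hu]
          exact le_trans (Finset.sum_le_sum_of_subset_of_nonneg Finset.sdiff_subset
            (fun w hw _ => hyF w (Finset.mem_inter.mp hw).2)) hcl.le
        · exact hres' u (Finset.mem_erase.mpr ⟨hu, huX⟩)


set_option maxHeartbeats 1000000 in
/-- Theorem "facility-capacity", rounding guarantee: From any
fractional solution `(z, y, λ)` of the capacitated fair facility location LP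
and any `θ, δ ∈ (0, 1/2)`, one can obtain a nonempty set `L ⊆ Ls` of open
facilities and an assignment `g` of clients to `L` such that (i) every group's
average connection cost is at most `(3/θ)·(1/(1-δ))·λ`, (ii) the total opening
cost is at most `(2/(δ(1-θ)))·∑_{v ∈ Ls} f v · y v`, and (iii) every open
facility serves at most `⌈U/((1-θ)(1-δ))⌉` clients. -/
theorem capacitated_fair_facility_rounding {Ω : Type*} [MetricSpace Ω] [DecidableEq Ω]
    (Xc : Finset Ω) (Ls : Finset Ω) (hLs : Ls.Nonempty)
    {m : ℕ} (hm : 0 < m) (Xs : Fin m → Finset Ω)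
    (hXne : ∀ i, (Xs i).Nonempty)
    (hXdisj : ∀ i j, i ≠ j → Disjoint (Xs i) (Xs j))
    (hXsub : ∀ i, Xs i ⊆ Xc)
    (hXcover : ∀ x ∈ Xc, ∃ i, x ∈ Xs i)
    (f : Ω → ℝ) (hf : ∀ v ∈ Ls, 0 ≤ f v)
    (U : ℝ) (hU : 0 < U)
    (z : Ω → Ω → ℝ) (y : Ω → ℝ) (lam : ℝ)
    (hz01 : ∀ u ∈ Xc, ∀ v ∈ Ls, 0 ≤ z u v ∧ z u v ≤ 1)
    (hy01 : ∀ v ∈ Ls, 0 ≤ y v ∧ y v ≤ 1)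
    (hz1 : ∀ u ∈ Xc, ∑ v ∈ Ls, z u v = 1)
    (hzy : ∀ u ∈ Xc, ∀ v ∈ Ls, z u v ≤ y v)
    (hcap : ∀ v ∈ Ls, ∑ u ∈ Xc, z u v ≤ U * y v)
    (hlam : ∀ i, (1 / ((Xs i).card : ℝ)) * ∑ u ∈ Xs i, ∑ v ∈ Ls, dist u v * z u v ≤ lam) :
    ∀ θ δ : ℝ, 0 < θ → θ < 1 / 2 → 0 < δ → δ < 1 / 2 →
      ∃ (L : Finset Ω) (g : Ω → Ω), L.Nonempty ∧ L ⊆ Ls ∧ (∀ u ∈ Xc, g u ∈ L) ∧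
        (∀ i, (1 / ((Xs i).card : ℝ)) * ∑ u ∈ Xs i, dist u (g u)
          ≤ (3 / θ) * (1 / (1 - δ)) * lam) ∧
        (∑ v ∈ L, f v ≤ (2 / (δ * (1 - θ))) * ∑ v ∈ Ls, f v * y v) ∧
        (∀ v ∈ L, (Xc.filter (fun u => g u = v)).card ≤ ⌈U / ((1 - θ) * (1 - δ))⌉₊) := by
  intro θ δ hθ0 hθ2 hδ0 hδ2
  have hθ1 : (0:ℝ) < 1 - θ := by linarith
  have hδ1 : (0:ℝ) < 1 - δ := by linarith
  set ε : ℝ := δ * (1 - θ) / 2 with hεdef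
  have hε0 : 0 < ε := by rw [hεdef]; positivity
  have hεδ : ε ≤ δ / 2 := by rw [hεdef]; nlinarith
  have hεhalf : ε ≤ 1 / 2 := by nlinarith
  have hεlt : ε < 1 - θ := by nlinarith
  set D : Ω → ℝ := fun u => ∑ v ∈ Ls, dist u v * z u v with hDdef
  set R : Ω → ℝ := fun u => D u / θ with hRdef
  set B : Ω → Finset Ω := fun u => Ls.filter fun v => dist u v ≤ R u with hBdef
  have hDnn : ∀ u ∈ Xc, 0 ≤ D u := fun u hu =>
    Finset.sum_nonneg fun v hv => mul_nonneg dist_nonneg (hz01 u hu v hv).1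
  have hRnn : ∀ u ∈ Xc, 0 ≤ R u := fun u hu => div_nonneg (hDnn u hu) hθ0.le
  have hBsub : ∀ u, B u ⊆ Ls := fun u => Finset.filter_subset _ _
  have hBfil : ∀ u, B u = Ls.filter (fun v => dist u v ≤ R u) := fun u => by
    simp only [hBdef]
  -- Markov: at least 1 - θ of z-mass of u is within the ball B u
  have hBz : ∀ u ∈ Xc, 1 - θ ≤ ∑ w ∈ B u, z u w := by
    intro u hu
    have hsplit := Finset.sum_filter_add_sum_filter_not Ls (fun v => dist u v ≤ R u) (z u)
    have hz1u := hz1 u hu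
    have hout : ∑ v ∈ Ls.filter (fun v => ¬ dist u v ≤ R u), z u v ≤ θ := by
      have h1 : R u * ∑ v ∈ Ls.filter (fun v => ¬ dist u v ≤ R u), z u v ≤
          ∑ v ∈ Ls.filter (fun v => ¬ dist u v ≤ R u), dist u v * z u v := by
        rw [Finset.mul_sum]
        refine Finset.sum_le_sum ?_
        intro v hv
        obtain ⟨hvLs, hvd⟩ := Finset.mem_filter.mp hv
        push_neg at hvd
        exact mul_le_mul_of_nonneg_right hvd.le (hz01 u hu v hvLs).1
      have h2 : ∑ v ∈ Ls.filter (fun v => ¬ dist u v ≤ R u), dist u v * z u v ≤ D u := by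
        have hDu : D u = ∑ v ∈ Ls, dist u v * z u v := by simp only [hDdef]
        rw [hDu]
        refine Finset.sum_le_sum_of_subset_of_nonneg (Finset.filter_subset _ _) ?_
        intro v hv _
        exact mul_nonneg dist_nonneg (hz01 u hu v hv).1
      have hDθR : D u = θ * R u := by
        have hRu : R u = D u / θ := by simp only [hRdef]
        rw [hRu]
        field_simp
      by_cases hR0 : R u = 0
      · have hD0 : D u = 0 := by rw [hDθR, hR0, mul_zero]
        have hD0' : ∑ v ∈ Ls, dist u v * z u v = 0 := by
          have hDu : D u = ∑ v ∈ Ls, dist u v * z u v := by simp only [hDdef]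
          rw [← hDu]; exact hD0
        have hall : ∀ v ∈ Ls, dist u v * z u v = 0 :=
          (Finset.sum_eq_zero_iff_of_nonneg
            (fun v hv => mul_nonneg dist_nonneg (hz01 u hu v hv).1)).mp hD0'
        have hz0 : ∀ v ∈ Ls.filter (fun v => ¬ dist u v ≤ R u), z u v = 0 := by
          intro v hv
          obtain ⟨hvLs, hvd⟩ := Finset.mem_filter.mp hv
          push_neg at hvd
          rw [hR0] at hvd
          rcases mul_eq_zero.mp (hall v hvLs) with h | h
          · exact absurd h (by linarith)
          · exact h
        rw [Finset.sum_eq_zero hz0]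
        exact hθ0.le
      · have hRpos : 0 < R u := lt_of_le_of_ne (hRnn u hu) (Ne.symm hR0)
        have h3 := h1.trans (h2.trans_eq hDθR)
        have h4 : R u * ∑ v ∈ Ls.filter (fun v => ¬ dist u v ≤ R u), z u v ≤
            R u * θ := by linarith
        exact le_of_mul_le_mul_left h4 hRpos
    have hBu : ∑ w ∈ B u, z u w = ∑ v ∈ Ls.filter (fun v => dist u v ≤ R u), z u v := by
      rw [hBfil u]
    rw [hBu]
    linarith
  -- the claims structure
  obtain ⟨O, Cl, hOsub, hClprop, hCldisj, hres⟩ :=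
    claims_exists y R B ε hε0 Xc Ls (fun w hw => (hy01 w hw).1)
  have hClsub : ∀ o ∈ O, Cl o ⊆ Ls := fun o ho =>
    (hClprop o ho).1.trans Finset.inter_subset_right
  have hClB : ∀ o ∈ O, Cl o ⊆ B o := fun o ho =>
    (hClprop o ho).1.trans Finset.inter_subset_left
  -- partition each claim into parts
  have hpold : ∀ o ∈ O, ∃ Ps : Finset (Finset Ω),
      (∀ P ∈ Ps, P ⊆ Cl o ∧ ε ≤ ∑ w ∈ P, y w ∧ ∑ w ∈ P, y w ≤ 1 + ε) ∧
      (∀ P ∈ Ps, ∀ Q ∈ Ps, P ≠ Q → Disjoint P Q) ∧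
      Cl o = Ps.biUnion id := fun o ho =>
    partition_exists y ε hε0 hεhalf (Cl o) (fun w hw => hy01 w (hClsub o ho hw))
      (hClprop o ho).2
  choose! pf hpf using hpold
  classical
  set PP : Finset (Ω × Finset Ω) := O.biUnion (fun o => (pf o).image fun P => (o, P))
    with hPPdef
  have hPPmem : ∀ p : Ω × Finset Ω, p ∈ PP ↔ p.1 ∈ O ∧ p.2 ∈ pf p.1 := by
    intro p
    constructor
    · intro hp
      rw [hPPdef, Finset.mem_biUnion] at hp
      obtain ⟨o, ho, him⟩ := hp
      rw [Finset.mem_image] at him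
      obtain ⟨P, hP, heq⟩ := him
      subst heq
      exact ⟨ho, hP⟩
    · intro ⟨h1, h2⟩
      rw [hPPdef, Finset.mem_biUnion]
      exact ⟨p.1, h1, Finset.mem_image.mpr ⟨p.2, h2, Prod.mk.eta⟩⟩
  have hPsub : ∀ p ∈ PP, p.2 ⊆ Cl p.1 := by
    intro p hp
    obtain ⟨h1, h2⟩ := (hPPmem p).mp hp
    exact ((hpf p.1 h1).1 p.2 h2).1
  have hPlo : ∀ p ∈ PP, ε ≤ ∑ w ∈ p.2, y w := by
    intro p hp
    obtain ⟨h1, h2⟩ := (hPPmem p).mp hp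
    exact ((hpf p.1 h1).1 p.2 h2).2.1
  have hPhi : ∀ p ∈ PP, ∑ w ∈ p.2, y w ≤ 1 + ε := by
    intro p hp
    obtain ⟨h1, h2⟩ := (hPPmem p).mp hp
    exact ((hpf p.1 h1).1 p.2 h2).2.2
  have hPO : ∀ p ∈ PP, p.1 ∈ O := fun p hp => ((hPPmem p).mp hp).1
  have hPls : ∀ p ∈ PP, p.2 ⊆ Ls := fun p hp => (hPsub p hp).trans (hClsub p.1 (hPO p hp))
  have hPne : ∀ p ∈ PP, p.2.Nonempty := by
    intro p hp
    rcases p.2.eq_empty_or_nonempty with h | h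
    · exfalso; have := hPlo p hp; rw [h] at this; simp at this; linarith
    · exact h
  have hPdisj : ∀ p ∈ PP, ∀ q ∈ PP, p ≠ q → Disjoint p.2 q.2 := by
    intro p hp q hq hne
    by_cases h : p.1 = q.1
    · have h2 : p.2 ≠ q.2 := fun h2 => hne (Prod.ext h h2)
      obtain ⟨ho, hpm⟩ := (hPPmem p).mp hp
      obtain ⟨ho', hqm⟩ := (hPPmem q).mp hq
      rw [← h] at hqm
      exact (hpf p.1 ho).2.1 p.2 hpm q.2 hqm h2
    · exact (hCldisj p.1 (hPO p hp) q.1 (hPO q hq) h).mono (hPsub p hp) (hPsub q hq)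
  -- choose the cheapest facility in each part
  have hminex : ∀ p ∈ PP, ∃ v ∈ p.2, ∀ w ∈ p.2, f v ≤ f w := fun p hp =>
    Finset.exists_min_image p.2 f (hPne p hp)
  haveI : Inhabited Ω := ⟨hLs.choose⟩
  choose! vsel hvmem hvmin using hminex
  set L : Finset Ω := PP.image vsel with hLdef
  have hLsub : L ⊆ Ls := by
    intro v hv
    rw [hLdef, Finset.mem_image] at hv
    obtain ⟨p, hp, rfl⟩ := hv
    exact hPls p hp (hvmem p hp)
  have hvinj : ∀ p ∈ PP, ∀ q ∈ PP, vsel p = vsel q → p = q := by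
    intro p hp q hq he
    by_contra hne
    have hd := hPdisj p hp q hq hne
    have h1 := hvmem p hp
    have h2 := hvmem q hq
    rw [he] at h1
    exact Finset.disjoint_left.mp hd h1 h2
  -- nonemptiness
  obtain ⟨u₀, hu₀⟩ := hXne ⟨0, hm⟩
  have hu₀c : u₀ ∈ Xc := hXsub _ hu₀
  have hmassB : ∀ u ∈ Xc, 1 - θ ≤ ∑ w ∈ B u, y w := fun u hu =>
    le_trans (hBz u hu) (Finset.sum_le_sum fun w hw => hzy u hu w (hBsub u hw))
  have hOne : O.Nonempty := by
    rcases O.eq_empty_or_nonempty with h | h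
    · exfalso
      have hr := hres u₀ hu₀c
      rw [h] at hr
      simp only [Finset.filter_empty, Finset.biUnion_empty, Finset.sdiff_empty] at hr
      rw [Finset.inter_eq_left.mpr (hBsub u₀)] at hr
      have := hmassB u₀ hu₀c
      linarith
    · exact h
  have hPPne : PP.Nonempty := by
    obtain ⟨o, ho⟩ := hOne
    have hcov := (hpf o ho).2.2
    rcases (pf o).eq_empty_or_nonempty with h | h
    · exfalso
      rw [h] at hcov
      simp only [Finset.biUnion_empty] at hcov
      have hm2 := (hClprop o ho).2
      rw [hcov] at hm2
      simp only [Finset.sum_empty] at hm2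
      linarith
    · obtain ⟨P, hP⟩ := h
      exact ⟨(o, P), (hPPmem (o, P)).mpr ⟨ho, hP⟩⟩
  have hLne : L.Nonempty := hPPne.image vsel
  set Cn : ℕ := ⌈U / ((1 - θ) * (1 - δ))⌉₊ with hCndef
  set A : Ω → Finset Ω := fun u => L.filter fun v => dist u v ≤ 3 * R u with hAdef
  -- kept-mass lower bound
  have hkept : ∀ u ∈ Xc, 1 - θ - ε ≤
      ∑ p ∈ PP.filter (fun p => vsel p ∈ A u), ∑ w ∈ p.2, z u w := by
    intro u hu
    set Kc := (O.filter fun o => R o ≤ R u).biUnion Cl with hKcdef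
    have h1 := Finset.sum_inter_add_sum_sdiff (B u) Kc (z u)
    have h2 : ∑ w ∈ B u \ Kc, z u w ≤ ∑ w ∈ B u \ Kc, y w :=
      Finset.sum_le_sum fun w hw => hzy u hu w (hBsub u (Finset.mem_sdiff.mp hw).1)
    have h3 : ∑ w ∈ B u \ Kc, y w ≤ ε := by
      have hr := hres u hu
      rwa [Finset.inter_eq_left.mpr (hBsub u)] at hr
    have h4 : 1 - θ - ε ≤ ∑ w ∈ B u ∩ Kc, z u w := by
      have := hBz u hu; linarith
    have hsubT : B u ∩ Kc ⊆ (PP.filter fun p => vsel p ∈ A u).biUnion (fun p => p.2) := by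
      intro w hw
      obtain ⟨hwB, hwK⟩ := Finset.mem_inter.mp hw
      rw [hKcdef, Finset.mem_biUnion] at hwK
      obtain ⟨o, hofil, hwCl⟩ := hwK
      obtain ⟨hoO, hoR⟩ := Finset.mem_filter.mp hofil
      have hcov := (hpf o hoO).2.2
      have hwCl' := hwCl
      rw [hcov, Finset.mem_biUnion] at hwCl'
      obtain ⟨P, hPmem, hwP⟩ := hwCl'
      simp only [id] at hwP
      have hpPP : (o, P) ∈ PP := (hPPmem (o, P)).mpr ⟨hoO, hPmem⟩
      have hvP : vsel (o, P) ∈ (o, P).2 := hvmem _ hpPP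
      have hvA : vsel (o, P) ∈ A u := by
        simp only [hAdef]
        refine Finset.mem_filter.mpr ⟨Finset.mem_image.mpr ⟨_, hpPP, rfl⟩, ?_⟩
        have hwBo : w ∈ B o := hClB o hoO hwCl
        have hvClo : vsel (o, P) ∈ Cl o := hPsub _ hpPP hvP
        have hvBo : vsel (o, P) ∈ B o := hClB o hoO hvClo
        rw [hBfil u] at hwB
        rw [hBfil o] at hwBo hvBo
        have hd1 : dist u w ≤ R u := (Finset.mem_filter.mp hwB).2
        have hd2 : dist o w ≤ R o := (Finset.mem_filter.mp hwBo).2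
        have hd3 : dist o (vsel (o, P)) ≤ R o := (Finset.mem_filter.mp hvBo).2
        calc dist u (vsel (o, P)) ≤ dist u w + dist w (vsel (o, P)) := dist_triangle _ _ _
          _ ≤ dist u w + (dist w o + dist o (vsel (o, P))) := by
              linarith [dist_triangle w o (vsel (o, P))]
          _ ≤ 3 * R u := by rw [dist_comm w o]; linarith
      exact Finset.mem_biUnion.mpr ⟨(o, P), Finset.mem_filter.mpr ⟨hpPP, hvA⟩, hwP⟩
    have h5 : ∑ w ∈ B u ∩ Kc, z u w ≤
        ∑ w ∈ (PP.filter fun p => vsel p ∈ A u).biUnion (fun p => p.2), z u w := by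
      refine Finset.sum_le_sum_of_subset_of_nonneg hsubT ?_
      intro w hw _
      obtain ⟨p, hp, hwp⟩ := Finset.mem_biUnion.mp hw
      exact (hz01 u hu w (hPls p (Finset.mem_filter.mp hp).1 hwp)).1
    have h6 : ∑ w ∈ (PP.filter fun p => vsel p ∈ A u).biUnion (fun p => p.2), z u w =
        ∑ p ∈ PP.filter (fun p => vsel p ∈ A u), ∑ w ∈ p.2, z u w := by
      refine Finset.sum_biUnion ?_
      intro a ha b hb hab
      exact hPdisj a (Finset.mem_filter.mp (Finset.mem_coe.mp ha)).1
        b (Finset.mem_filter.mp (Finset.mem_coe.mp hb)).1 hab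
    linarith
  -- key numerical inequality
  have hCle : U / ((1 - θ) * (1 - δ)) ≤ (Cn : ℝ) := Nat.le_ceil _
  have hkey : U * (1 + ε) ≤ (1 - θ - ε) * Cn := by
    have hεθ : (0:ℝ) < 1 - θ - ε := by linarith
    have hW : (0:ℝ) < (1 - θ) * (1 - δ) := mul_pos hθ1 hδ1
    have h1 : U * (1 + ε) ≤ (1 - θ - ε) * (U / ((1 - θ) * (1 - δ))) := by
      have heq : (1 - θ - ε) * (U / ((1 - θ) * (1 - δ))) =
          ((1 - θ - ε) * U) / ((1 - θ) * (1 - δ)) := by ring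
      rw [heq, le_div_iff₀ hW, hεdef]
      nlinarith [mul_nonneg (mul_nonneg (mul_nonneg hU.le hθ1.le) hδ0.le)
        (by nlinarith : (0:ℝ) ≤ θ * (1 - δ) + δ), sq_nonneg (1 - θ), sq_nonneg (1 - δ)]
    have h2 : (1 - θ - ε) * (U / ((1 - θ) * (1 - δ))) ≤ (1 - θ - ε) * Cn :=
      mul_le_mul_of_nonneg_left hCle hεθ.le
    linarith
  -- Hall's condition
  have hHall : ∀ s : Finset {x // x ∈ Xc},
      s.card ≤ (s.biUnion fun u => (A ↑u) ×ˢ Finset.range Cn).card := by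
    intro s
    set N : Finset Ω := s.biUnion (fun u => A ↑u) with hNdef
    have hprod : (s.biUnion fun u => (A ↑u) ×ˢ Finset.range Cn) = N ×ˢ Finset.range Cn := by
      ext ⟨v, j⟩
      simp only [Finset.mem_biUnion, Finset.mem_product, hNdef]
      tauto
    rw [hprod, Finset.card_product, Finset.card_range]
    have c1 : (1 - θ - ε) * s.card ≤
        ∑ u ∈ s, ∑ p ∈ PP.filter (fun p => vsel p ∈ A ↑u), ∑ w ∈ p.2, z (↑u) w := by
      have hc := Finset.card_nsmul_le_sum s
        (fun u => ∑ p ∈ PP.filter (fun p => vsel p ∈ A ↑u), ∑ w ∈ p.2, z (↑u) w)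
        (1 - θ - ε) (fun u _ => hkept ↑u u.2)
      rw [nsmul_eq_mul] at hc
      calc (1 - θ - ε) * s.card = s.card * (1 - θ - ε) := by ring
        _ ≤ _ := hc
    set Q : Finset (Ω × Finset Ω) := PP.filter (fun p => vsel p ∈ N) with hQdef
    have c2 : ∑ u ∈ s, ∑ p ∈ PP.filter (fun p => vsel p ∈ A ↑u), ∑ w ∈ p.2, z (↑u) w ≤
        ∑ u ∈ s, ∑ p ∈ Q, ∑ w ∈ p.2, z (↑u) w := by
      refine Finset.sum_le_sum ?_
      intro u hu
      refine Finset.sum_le_sum_of_subset_of_nonneg ?_ ?_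
      · intro p hp
        obtain ⟨hpPP, hpA⟩ := Finset.mem_filter.mp hp
        exact Finset.mem_filter.mpr ⟨hpPP, Finset.mem_biUnion.mpr ⟨u, hu, hpA⟩⟩
      · intro p hp _
        exact Finset.sum_nonneg fun w hw =>
          (hz01 (↑u) u.2 w (hPls p (Finset.mem_filter.mp hp).1 hw)).1
    have c3 : ∑ u ∈ s, ∑ p ∈ Q, ∑ w ∈ p.2, z (↑u) w ≤ Q.card * (U * (1 + ε)) := by
      rw [Finset.sum_comm]
      have hper : ∀ p ∈ Q, ∑ u ∈ s, ∑ w ∈ p.2, z (↑u) w ≤ U * (1 + ε) := by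
        intro p hp
        have hpPP := (Finset.mem_filter.mp hp).1
        rw [Finset.sum_comm]
        have hw1 : ∀ w ∈ p.2, ∑ u ∈ s, z (↑u) w ≤ ∑ x ∈ Xc, z x w := by
          intro w hw
          have himg : ∑ u ∈ s, z (↑u) w = ∑ x ∈ s.image Subtype.val, z x w := by
            rw [Finset.sum_image (fun a _ b _ h => Subtype.ext h)]
          rw [himg]
          refine Finset.sum_le_sum_of_subset_of_nonneg ?_ ?_
          · intro x hx
            obtain ⟨u, hu, rfl⟩ := Finset.mem_image.mp hx
            exact u.2
          · intro x hx _
            exact (hz01 x hx w (hPls p hpPP hw)).1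
        calc ∑ w ∈ p.2, ∑ u ∈ s, z (↑u) w ≤ ∑ w ∈ p.2, ∑ x ∈ Xc, z x w :=
              Finset.sum_le_sum hw1
          _ ≤ ∑ w ∈ p.2, U * y w :=
              Finset.sum_le_sum fun w hw => hcap w (hPls p hpPP hw)
          _ = U * ∑ w ∈ p.2, y w := by rw [Finset.mul_sum]
          _ ≤ U * (1 + ε) := mul_le_mul_of_nonneg_left (hPhi p hpPP) hU.le
      have hc := Finset.sum_le_card_nsmul Q _ (U * (1 + ε)) hper
      rw [nsmul_eq_mul] at hc
      exact hc
    have c4 : Q.card ≤ N.card := by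
      refine Finset.card_le_card_of_injOn vsel (fun p hp => (Finset.mem_filter.mp hp).2) ?_
      intro p hp q hq he
      exact hvinj p (Finset.mem_filter.mp (Finset.mem_coe.mp hp)).1
        q (Finset.mem_filter.mp (Finset.mem_coe.mp hq)).1 he
    have hreal : ((s.card : ℝ)) ≤ (N.card : ℝ) * Cn := by
      have hQN : (Q.card : ℝ) ≤ N.card := Nat.cast_le.mpr c4
      have hUe : (0:ℝ) ≤ U * (1 + ε) := mul_nonneg hU.le (by linarith)
      have hpos : (0:ℝ) < 1 - θ - ε := by linarith
      have hchain : (1 - θ - ε) * s.card ≤ (N.card : ℝ) * (U * (1 + ε)) := by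
        calc (1 - θ - ε) * s.card ≤ (Q.card : ℝ) * (U * (1 + ε)) := by
              linarith [c1, c2, c3]
          _ ≤ (N.card : ℝ) * (U * (1 + ε)) := mul_le_mul_of_nonneg_right hQN hUe
      have h2 : (N.card:ℝ) * (U * (1 + ε)) ≤ (N.card:ℝ) * ((1 - θ - ε) * Cn) :=
        mul_le_mul_of_nonneg_left hkey (Nat.cast_nonneg _)
      have h3 : (1 - θ - ε) * (s.card:ℝ) ≤ (1 - θ - ε) * ((N.card:ℝ) * Cn) := by
        calc (1 - θ - ε) * (s.card:ℝ) ≤ (N.card : ℝ) * (U * (1 + ε)) := hchain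
          _ ≤ (N.card:ℝ) * ((1 - θ - ε) * Cn) := h2
          _ = (1 - θ - ε) * ((N.card:ℝ) * Cn) := by ring
      exact le_of_mul_le_mul_left h3 hpos
    exact_mod_cast hreal
  obtain ⟨Fm, hFinj, hFmem⟩ :=
    (Finset.all_card_le_biUnion_card_iff_exists_injective
      (fun u : {x // x ∈ Xc} => (A ↑u) ×ˢ Finset.range Cn)).mp hHall
  set g : Ω → Ω := fun x => if hx : x ∈ Xc then (Fm ⟨x, hx⟩).1 else hLne.choose with hgdef
  have hgA : ∀ u, ∀ hu : u ∈ Xc, g u ∈ A u ∧ (Fm ⟨u, hu⟩).2 ∈ Finset.range Cn := by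
    intro u hu
    have h := hFmem ⟨u, hu⟩
    rw [Finset.mem_product] at h
    constructor
    · rw [hgdef]; dsimp only; rw [dif_pos hu]; exact h.1
    · exact h.2
  refine ⟨L, g, hLne, hLsub, ?_, ?_, ?_, ?_⟩
  · exact fun u hu => Finset.filter_subset _ _ ((hgA u hu).1)
  · -- group distance bound
    intro i
    have hcpos : (0:ℝ) < ((Xs i).card : ℝ) := by exact_mod_cast (hXne i).card_pos
    have hdist : ∀ u ∈ Xs i, dist u (g u) ≤ 3 * R u := by
      intro u hu
      have h := (hgA u (hXsub i hu)).1
      simp only [hAdef, Finset.mem_filter] at h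
      exact h.2
    have hsum : ∑ u ∈ Xs i, dist u (g u) ≤ (3/θ) * ∑ u ∈ Xs i, D u := by
      rw [Finset.mul_sum]
      refine Finset.sum_le_sum ?_
      intro u hu
      have h := hdist u hu
      have hRu : R u = D u / θ := by simp only [hRdef]
      rw [hRu] at h
      calc dist u (g u) ≤ 3 * (D u / θ) := h
        _ = 3 / θ * D u := by ring
    have hDpos : (0:ℝ) ≤ ∑ u ∈ Xs i, D u :=
      Finset.sum_nonneg fun u hu => hDnn u (hXsub i hu)
    have hlamD : 1 / ((Xs i).card : ℝ) * ∑ u ∈ Xs i, D u ≤ lam := by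
      have hli := hlam i
      simp only [hDdef] at hli ⊢
      exact hli
    have hlam0 : 0 ≤ lam := by
      refine le_trans ?_ hlamD
      exact mul_nonneg (one_div_nonneg.mpr hcpos.le) hDpos
    have h3θ : (0:ℝ) ≤ 3 / θ := div_nonneg (by norm_num) hθ0.le
    have hfin : 1 / ((Xs i).card:ℝ) * ∑ u ∈ Xs i, dist u (g u) ≤ (3/θ) * lam := by
      have e1 : 1 / ((Xs i).card:ℝ) * ∑ u ∈ Xs i, dist u (g u) ≤
          1 / ((Xs i).card:ℝ) * ((3/θ) * ∑ u ∈ Xs i, D u) :=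
        mul_le_mul_of_nonneg_left hsum (one_div_nonneg.mpr hcpos.le)
      have e2 : 1 / ((Xs i).card:ℝ) * ((3/θ) * ∑ u ∈ Xs i, D u) =
          (3/θ) * (1 / ((Xs i).card:ℝ) * ∑ u ∈ Xs i, D u) := by ring
      rw [e2] at e1
      exact e1.trans (mul_le_mul_of_nonneg_left hlamD h3θ)
    have h1d : (1:ℝ) ≤ 1 / (1 - δ) := by
      rw [le_div_iff₀ hδ1]; linarith
    calc 1 / ((Xs i).card:ℝ) * ∑ u ∈ Xs i, dist u (g u) ≤ (3/θ) * lam := hfin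
      _ = (3/θ) * 1 * lam := by ring
      _ ≤ (3/θ) * (1/(1-δ)) * lam := by
          refine mul_le_mul_of_nonneg_right ?_ hlam0
          exact mul_le_mul_of_nonneg_left h1d h3θ
  · -- cost bound
    have e1 : ∑ v ∈ L, f v = ∑ p ∈ PP, f (vsel p) := by
      rw [hLdef]; exact Finset.sum_image hvinj
    have e2 : ∀ p ∈ PP, f (vsel p) ≤ (1/ε) * ∑ w ∈ p.2, f w * y w := by
      intro p hp
      have hv := hvmem p hp
      have hfv : 0 ≤ f (vsel p) := hf _ (hPls p hp hv)
      have hmain : ε * f (vsel p) ≤ ∑ w ∈ p.2, f w * y w := by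
        calc ε * f (vsel p) ≤ (∑ w ∈ p.2, y w) * f (vsel p) :=
              mul_le_mul_of_nonneg_right (hPlo p hp) hfv
          _ = ∑ w ∈ p.2, y w * f (vsel p) := Finset.sum_mul _ _ _
          _ ≤ ∑ w ∈ p.2, f w * y w := by
              refine Finset.sum_le_sum ?_
              intro w hw
              have hyw : 0 ≤ y w := (hy01 w (hPls p hp hw)).1
              have hm := hvmin p hp w hw
              calc y w * f (vsel p) ≤ y w * f w := mul_le_mul_of_nonneg_left hm hyw
                _ = f w * y w := mul_comm _ _
      have heq : f (vsel p) = (1/ε) * (ε * f (vsel p)) := by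
        rw [← mul_assoc, one_div_mul_cancel (ne_of_gt hε0), one_mul]
      rw [heq]
      exact mul_le_mul_of_nonneg_left hmain (one_div_nonneg.mpr hε0.le)
    have e3 : ∑ p ∈ PP, f (vsel p) ≤ (1/ε) * ∑ p ∈ PP, ∑ w ∈ p.2, f w * y w := by
      rw [Finset.mul_sum]
      exact Finset.sum_le_sum e2
    have e4 : ∑ p ∈ PP, ∑ w ∈ p.2, f w * y w =
        ∑ w ∈ PP.biUnion (fun p => p.2), f w * y w := by
      refine (Finset.sum_biUnion ?_).symm
      intro a ha b hb hab
      exact hPdisj a (Finset.mem_coe.mp ha) b (Finset.mem_coe.mp hb) hab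
    have e5 : ∑ w ∈ PP.biUnion (fun p => p.2), f w * y w ≤ ∑ v ∈ Ls, f v * y v := by
      refine Finset.sum_le_sum_of_subset_of_nonneg ?_ ?_
      · intro w hw
        obtain ⟨p, hp, hwp⟩ := Finset.mem_biUnion.mp hw
        exact hPls p hp hwp
      · intro v hv _
        exact mul_nonneg (hf v hv) (hy01 v hv).1
    have e6 : (1:ℝ)/ε = 2 / (δ * (1 - θ)) := by
      rw [hεdef, one_div_div]
    calc ∑ v ∈ L, f v = ∑ p ∈ PP, f (vsel p) := e1
      _ ≤ (1/ε) * ∑ p ∈ PP, ∑ w ∈ p.2, f w * y w := e3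
      _ = (1/ε) * ∑ w ∈ PP.biUnion (fun p => p.2), f w * y w := by rw [e4]
      _ ≤ (1/ε) * ∑ v ∈ Ls, f v * y v :=
          mul_le_mul_of_nonneg_left e5 (one_div_nonneg.mpr hε0.le)
      _ = 2 / (δ * (1 - θ)) * ∑ v ∈ Ls, f v * y v := by rw [e6]
  · -- capacity bound
    intro v hv
    have hcard : (Xc.filter fun u => g u = v).card ≤ (Finset.range Cn).card := by
      refine Finset.card_le_card_of_injOn
        (fun u => if hu : u ∈ Xc then (Fm ⟨u, hu⟩).2 else 0) ?_ ?_
      · intro u hu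
        obtain ⟨huc, hgv⟩ := Finset.mem_filter.mp hu
        dsimp only
        rw [dif_pos huc]
        exact (hgA u huc).2
      · intro u hu u' hu' he
        obtain ⟨huc, hgv⟩ := Finset.mem_filter.mp (Finset.mem_coe.mp hu)
        obtain ⟨huc', hgv'⟩ := Finset.mem_filter.mp (Finset.mem_coe.mp hu')
        dsimp only at he
        rw [dif_pos huc, dif_pos huc'] at he
        have hg1 : (Fm ⟨u, huc⟩).1 = (Fm ⟨u', huc'⟩).1 := by
          have h1 : g u = (Fm ⟨u, huc⟩).1 := by
            rw [hgdef]; dsimp only; rw [dif_pos huc]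
          have h2 : g u' = (Fm ⟨u', huc'⟩).1 := by
            rw [hgdef]; dsimp only; rw [dif_pos huc']
          rw [← h1, ← h2, hgv, hgv']
        have hFe : Fm ⟨u, huc⟩ = Fm ⟨u', huc'⟩ := Prod.ext hg1 he
        exact congrArg Subtype.val (hFinj hFe)
    rw [Finset.card_range] at hcard
    exact hcard
end

section
/- Fix an integer t ≥ 1 and reals 0 < ε ≤ d ≤ M. Let X be the disjoint union {a₁} ∪ A₂ ∪ {b₁} ∪ B₂ with |A₂| = |B₂| = t, equipped with the distance: ε between two distinct points of A₂ and between two distinct points of B₂; d between a₁ and any point of A₂ and between b₁ and any point of B₂; and M between any point of {a₁} ∪ A₂ and any point of {b₁} ∪ B₂. Then: (i) this distance is a metric on X; let the groups be X₁ = {a₁} ∪ B₂ and X₂ = {b₁} ∪ A₂ and consider the objective Φ(C) := max( Σ_{u∈X₁} d(u,C), Σ_{u∈X₂} d(u,C) ) over 2-element center sets C ⊆ X; (ii) Φ({a₁,b₁}) = t·d; (iii) for any x ∈ A₂ and y ∈ B₂, Φ({x,y}) ≤ t·ε + d, so the optimal objective is at most t·ε + d; and (iv) {a₁,b₁} is locally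 optimal under single swaps: every C' obtained from {a₁,b₁} by removing one center and adding one point of X \ {a₁,b₁} satisfies Φ(C') ≥ t·d. Hence the local search algorithm for the AbsError-fair objective can return a local optimum whose objective is at least (t·d)/(t·ε + d) times the global optimum, a ratio that tends to t as ε → 0. -/
open Finset

/-- A "side" of the instance: one isolated point (`Sum.inl`, i.e. `a₁` or `b₁`)
together with `t` clustered points (`Sum.inr`, i.e. `A₂` or `B₂`). -/
abbrev LSide (t : ℕ) := Unit ⊕ Fin t

/-- The point set `X = {a₁} ∪ A₂ ∪ {b₁} ∪ B₂`: the left summand is the `A` side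
and the right summand is the `B` side. -/
abbrev LPt (t : ℕ) := LSide t ⊕ LSide t

/-- Distance within one side: `0` on the diagonal, `ε` between two distinct
clustered points, `d` between the isolated point and a clustered point. -/
def lsDist (t : ℕ) (ε d : ℝ) : LSide t → LSide t → ℝ
  | Sum.inl _, Sum.inl _ => 0
  | Sum.inl _, Sum.inr _ => d
  | Sum.inr _, Sum.inl _ => d
  | Sum.inr i, Sum.inr j => if i = j then 0 else ε

/-- The distance on `X`: `lsDist` within a side, `M` across the two sides. -/
def lpDist (t : ℕ) (ε d M : ℝ) : LPt t → LPt t → ℝ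
  | Sum.inl a, Sum.inl b => lsDist t ε d a b
  | Sum.inl _, Sum.inr _ => M
  | Sum.inr _, Sum.inl _ => M
  | Sum.inr a, Sum.inr b => lsDist t ε d a b

def pa1 (t : ℕ) : LPt t := Sum.inl (Sum.inl ())
def pb1 (t : ℕ) : LPt t := Sum.inr (Sum.inl ())
def pA2 (t : ℕ) (i : Fin t) : LPt t := Sum.inl (Sum.inr i)
def pB2 (t : ℕ) (i : Fin t) : LPt t := Sum.inr (Sum.inr i)

/-- Group `X₁ = {a₁} ∪ B₂`. -/
def grp1 (t : ℕ) : Finset (LPt t) := insert (pa1 t) (univ.image (pB2 t))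

/-- Group `X₂ = {b₁} ∪ A₂`. -/
def grp2 (t : ℕ) : Finset (LPt t) := insert (pb1 t) (univ.image (pA2 t))

/-- The AbsError-fair objective `Φ(C) = max(∑_{u ∈ X₁} d(u,C), ∑_{u ∈ X₂} d(u,C))`. -/
noncomputable def lsPhi (t : ℕ) (ε d M : ℝ) (C : Finset (LPt t)) (hC : C.Nonempty) : ℝ :=
  max (∑ u ∈ grp1 t, C.inf' hC (fun c => lpDist t ε d M u c))
      (∑ u ∈ grp2 t, C.inf' hC (fun c => lpDist t ε d M u c))

/-!
Every point of the cluster `B₂` lies at distance at least `d` from every point outside `B₂`, so a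
center set missing `B₂` costs at least `t·d` on `X₁ ⊇ B₂`; symmetrically for `A₂` and `X₂`. A single
swap of `{a₁, b₁}` brings in a point of only one cluster, so it leaves the other cluster uncovered.
With one center in each cluster, by contrast, each cluster point costs at most `ε` and each of
`a₁, b₁` costs `d`.
-/

section Metric

variable {t : ℕ} {ε d M : ℝ}

lemma lsDist_comm (p q : LSide t) : lsDist t ε d p q = lsDist t ε d q p := by
  rcases p with ⟨⟩ | i <;> rcases q with ⟨⟩ | j <;> simp only [lsDist, eq_comm]

lemma lsDist_eq_zero_iff (hε : ε ≠ 0) (hd : d ≠ 0) (p q : LSide t) :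
    lsDist t ε d p q = 0 ↔ p = q := by
  rcases p with ⟨⟩ | i <;> rcases q with ⟨⟩ | j <;> simp [lsDist, hε, hd]

lemma lsDist_nonneg (hε : 0 ≤ ε) (hd : 0 ≤ d) (p q : LSide t) : 0 ≤ lsDist t ε d p q := by
  rcases p with ⟨⟩ | i <;> rcases q with ⟨⟩ | j <;> simp only [lsDist] <;> (try split_ifs) <;> order

lemma lsDist_le (hε : 0 ≤ ε) (hεd : ε ≤ d) (p q : LSide t) : lsDist t ε d p q ≤ d := by
  rcases p with ⟨⟩ | i <;> rcases q with ⟨⟩ | j <;> simp only [lsDist] <;> (try split_ifs) <;> order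

lemma lsDist_triangle (hε : 0 ≤ ε) (hεd : ε ≤ d) (p q r : LSide t) :
    lsDist t ε d p r ≤ lsDist t ε d p q + lsDist t ε d q r := by
  rcases p with ⟨⟩ | i <;> rcases q with ⟨⟩ | j <;> rcases r with ⟨⟩ | k <;>
    simp only [lsDist] <;> (try split_ifs) <;> first | linarith | simp_all

lemma lpDist_comm (p q : LPt t) : lpDist t ε d M p q = lpDist t ε d M q p := by
  rcases p with p | p <;> rcases q with q | q <;> simp only [lpDist, lsDist_comm p q]

lemma lpDist_eq_zero_iff (hε : ε ≠ 0) (hd : d ≠ 0) (hM : M ≠ 0) (p q : LPt t) :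
    lpDist t ε d M p q = 0 ↔ p = q := by
  rcases p with p | p <;> rcases q with q | q <;> simp [lpDist, lsDist_eq_zero_iff hε hd, hM]

lemma lpDist_nonneg (hε : 0 ≤ ε) (hd : 0 ≤ d) (hM : 0 ≤ M) (p q : LPt t) :
    0 ≤ lpDist t ε d M p q := by
  rcases p with p | p <;> rcases q with q | q <;> simp only [lpDist] <;>
    first | exact hM | exact lsDist_nonneg hε hd p q

lemma lpDist_triangle (hε : 0 ≤ ε) (hεd : ε ≤ d) (hdM : d ≤ M) (p q r : LPt t) :
    lpDist t ε d M p r ≤ lpDist t ε d M p q + lpDist t ε d M q r := by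
  have hd : 0 ≤ d := hε.trans hεd
  rcases p with p | p <;> rcases q with q | q <;> rcases r with r | r <;> simp only [lpDist] <;>
    linarith [lsDist_triangle hε hεd p q r, lsDist_nonneg hε hd p q, lsDist_nonneg hε hd q r,
      lsDist_le hε hεd p q, lsDist_le hε hεd p r, lsDist_le hε hεd q r]

end Metric

section Objective

variable {t : ℕ} {ε d M : ℝ}

noncomputable def groupCost (t : ℕ) (ε d M : ℝ) (G C : Finset (LPt t)) (hC : C.Nonempty) : ℝ :=
  ∑ u ∈ G, C.inf' hC (fun c => lpDist t ε d M u c)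

lemma lsPhi_eq_max_groupCost (C : Finset (LPt t)) (hC : C.Nonempty) :
    lsPhi t ε d M C hC = max (groupCost t ε d M (grp1 t) C hC) (groupCost t ε d M (grp2 t) C hC) :=
  rfl

lemma sum_grp1 (g : LPt t → ℝ) : ∑ u ∈ grp1 t, g u = g (pa1 t) + ∑ i, g (pB2 t i) := by
  rw [grp1, sum_insert (by simp [pa1, pB2]), sum_image]
  intro i _ j _ h
  simpa [pB2] using h

lemma sum_grp2 (g : LPt t → ℝ) : ∑ u ∈ grp2 t, g u = g (pb1 t) + ∑ i, g (pA2 t i) := by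
  rw [grp2, sum_insert (by simp [pb1, pA2]), sum_image]
  intro i _ j _ h
  simpa [pA2] using h

lemma groupCost_grp1_le {C : Finset (LPt t)} (hC : C.Nonempty) {a b : LPt t} (ha : a ∈ C)
    (hb : b ∈ C) :
    groupCost t ε d M (grp1 t) C hC ≤ lpDist t ε d M (pa1 t) a + ∑ k, lpDist t ε d M (pB2 t k) b := by
  rw [groupCost, sum_grp1]
  gcongr
  · exact inf'_le _ ha
  · exact inf'_le _ hb

lemma groupCost_grp2_le {C : Finset (LPt t)} (hC : C.Nonempty) {a b : LPt t} (hb : b ∈ C)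
    (ha : a ∈ C) :
    groupCost t ε d M (grp2 t) C hC ≤ lpDist t ε d M (pb1 t) b + ∑ k, lpDist t ε d M (pA2 t k) a := by
  rw [groupCost, sum_grp2]
  gcongr
  · exact inf'_le _ hb
  · exact inf'_le _ ha

lemma le_lpDist_pB2 (hdM : d ≤ M) {c : LPt t} (hc : ∀ j, c ≠ pB2 t j) (k : Fin t) :
    d ≤ lpDist t ε d M (pB2 t k) c := by
  rcases c with (⟨⟩ | i) | (⟨⟩ | i)
  · exact hdM
  · exact hdM
  · exact le_rfl
  · exact absurd rfl (hc i)

lemma le_lpDist_pA2 (hdM : d ≤ M) {c : LPt t} (hc : ∀ j, c ≠ pA2 t j) (k : Fin t) :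
    d ≤ lpDist t ε d M (pA2 t k) c := by
  rcases c with (⟨⟩ | i) | (⟨⟩ | i)
  · exact le_rfl
  · exact absurd rfl (hc i)
  · exact hdM
  · exact hdM

lemma mul_le_groupCost_grp1 (hε : 0 ≤ ε) (hεd : ε ≤ d) (hdM : d ≤ M) {C : Finset (LPt t)}
    (hC : C.Nonempty) (hB : ∀ j, pB2 t j ∉ C) : t * d ≤ groupCost t ε d M (grp1 t) C hC := by
  have hd : 0 ≤ d := hε.trans hεd
  rw [groupCost, sum_grp1]
  calc (t : ℝ) * d = 0 + ∑ _k : Fin t, d := by simp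
    _ ≤ _ := by
      gcongr with k
      · exact le_inf' _ _ fun c _ => lpDist_nonneg hε hd (hd.trans hdM) _ c
      · exact le_inf' _ _ fun c hc => le_lpDist_pB2 hdM (fun j h => hB j (h ▸ hc)) k

lemma mul_le_groupCost_grp2 (hε : 0 ≤ ε) (hεd : ε ≤ d) (hdM : d ≤ M) {C : Finset (LPt t)}
    (hC : C.Nonempty) (hA : ∀ j, pA2 t j ∉ C) : t * d ≤ groupCost t ε d M (grp2 t) C hC := by
  have hd : 0 ≤ d := hε.trans hεd
  rw [groupCost, sum_grp2]
  calc (t : ℝ) * d = 0 + ∑ _k : Fin t, d := by simp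
    _ ≤ _ := by
      gcongr with k
      · exact le_inf' _ _ fun c _ => lpDist_nonneg hε hd (hd.trans hdM) _ c
      · exact le_inf' _ _ fun c hc => le_lpDist_pA2 hdM (fun j h => hA j (h ▸ hc)) k

lemma mul_le_lsPhi_of_forall_pB2_notMem (hε : 0 ≤ ε) (hεd : ε ≤ d) (hdM : d ≤ M)
    {C : Finset (LPt t)} (hC : C.Nonempty) (hB : ∀ j, pB2 t j ∉ C) :
    t * d ≤ lsPhi t ε d M C hC :=
  (mul_le_groupCost_grp1 hε hεd hdM hC hB).trans (le_max_left _ _)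

lemma mul_le_lsPhi_of_forall_pA2_notMem (hε : 0 ≤ ε) (hεd : ε ≤ d) (hdM : d ≤ M)
    {C : Finset (LPt t)} (hC : C.Nonempty) (hA : ∀ j, pA2 t j ∉ C) :
    t * d ≤ lsPhi t ε d M C hC :=
  (mul_le_groupCost_grp2 hε hεd hdM hC hA).trans (le_max_right _ _)

lemma lsPhi_pa1_pb1 (hε : 0 ≤ ε) (hεd : ε ≤ d) (hdM : d ≤ M) :
    lsPhi t ε d M {pa1 t, pb1 t} (insert_nonempty _ _) = t * d := by
  refine le_antisymm ?_ (mul_le_lsPhi_of_forall_pB2_notMem hε hεd hdM _ (by simp [pa1, pb1, pB2]))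
  rw [lsPhi_eq_max_groupCost, max_le_iff]
  constructor
  · refine (groupCost_grp1_le _ (mem_insert_self _ _) (mem_insert_of_mem (mem_singleton_self _))).trans
      (le_of_eq ?_)
    simp [lpDist, lsDist, pa1, pb1, pB2]
  · refine (groupCost_grp2_le _ (mem_insert_of_mem (mem_singleton_self _)) (mem_insert_self _ _)).trans
      (le_of_eq ?_)
    simp [lpDist, lsDist, pa1, pb1, pA2]

lemma lsDist_inr_inr_le (hε : 0 ≤ ε) (k l : Fin t) :
    lsDist t ε d (Sum.inr k) (Sum.inr l) ≤ ε := by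
  simp only [lsDist]
  split_ifs <;> order

lemma lsPhi_pA2_pB2_le (hε : 0 ≤ ε) (i j : Fin t) :
    lsPhi t ε d M {pA2 t i, pB2 t j} (insert_nonempty _ _) ≤ t * ε + d := by
  have hsum (l : Fin t) : d + ∑ k, lsDist t ε d (Sum.inr k) (Sum.inr l) ≤ t * ε + d :=
    calc _ ≤ d + ∑ _k : Fin t, ε := by gcongr with k; exact lsDist_inr_inr_le hε k l
      _ = t * ε + d := by simp [add_comm]
  rw [lsPhi_eq_max_groupCost, max_le_iff]
  constructor
  · exact (groupCost_grp1_le _ (mem_insert_self _ _)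
      (mem_insert_of_mem (mem_singleton_self _))).trans (hsum j)
  · exact (groupCost_grp2_le _ (mem_insert_of_mem (mem_singleton_self _))
      (mem_insert_self _ _)).trans (hsum i)

lemma mul_le_lsPhi_single_swap (hε : 0 ≤ ε) (hεd : ε ≤ d) (hdM : d ≤ M) {w : LPt t}
    (hwa : w ≠ pa1 t) (hwb : w ≠ pb1 t) :
    t * d ≤ lsPhi t ε d M {pa1 t, w} (insert_nonempty _ _) ∧
      t * d ≤ lsPhi t ε d M {pb1 t, w} (insert_nonempty _ _) := by
  rcases w with (⟨⟩ | i) | (⟨⟩ | i)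
  · exact absurd rfl hwa
  · constructor <;> exact mul_le_lsPhi_of_forall_pB2_notMem hε hεd hdM _ (by simp [pa1, pb1, pB2])
  · exact absurd rfl hwb
  · constructor <;> exact mul_le_lsPhi_of_forall_pA2_notMem hε hεd hdM _ (by simp [pa1, pb1, pA2])

end Objective
theorem local_search_bad_instance_general (t : ℕ) (ε d M : ℝ)
    (hε : 0 < ε) (hεd : ε ≤ d) (hdM : d ≤ M) :
    ((∀ p q : LPt t, lpDist t ε d M p q = 0 ↔ p = q) ∧
     (∀ p q : LPt t, lpDist t ε d M p q = lpDist t ε d M q p) ∧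
     (∀ p q r : LPt t, lpDist t ε d M p r ≤ lpDist t ε d M p q + lpDist t ε d M q r)) ∧
    (lsPhi t ε d M {pa1 t, pb1 t} (insert_nonempty _ _) = t * d) ∧
    (∀ i j : Fin t,
      lsPhi t ε d M {pA2 t i, pB2 t j} (insert_nonempty _ _) ≤ t * ε + d) ∧
    (∀ w : LPt t, w ≠ pa1 t → w ≠ pb1 t →
      t * d ≤ lsPhi t ε d M {pa1 t, w} (insert_nonempty _ _) ∧
      t * d ≤ lsPhi t ε d M {pb1 t, w} (insert_nonempty _ _)) := by
  have hd : 0 < d := hε.trans_le hεd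
  exact ⟨⟨lpDist_eq_zero_iff hε.ne' hd.ne' (hd.trans_le hdM).ne', lpDist_comm,
      lpDist_triangle hε.le hεd hdM⟩,
    lsPhi_pa1_pb1 hε.le hεd hdM, lsPhi_pA2_pB2_le hε.le,
    fun _ => mul_le_lsPhi_single_swap hε.le hεd hdM⟩

/-- For `t ≥ 1` and `0 < ε ≤ d ≤ M`, (i) `lpDist` is a metric on
`X = {a₁} ∪ A₂ ∪ {b₁} ∪ B₂`; (ii) `Φ({a₁,b₁}) = t·d`; (iii) for any `x ∈ A₂`,
`y ∈ B₂`, `Φ({x,y}) ≤ t·ε + d` (so the optimum is at most `t·ε + d`); and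
(iv) `{a₁,b₁}` is locally optimal under single swaps: every set obtained from
it by swapping one center for a point of `X \ {a₁,b₁}` has objective at least
`t·d`. -/
theorem local_search_bad_instance (t : ℕ) (ht : 1 ≤ t) (ε d M : ℝ)
    (hε : 0 < ε) (hεd : ε ≤ d) (hdM : d ≤ M) :
    ((∀ p q : LPt t, lpDist t ε d M p q = 0 ↔ p = q) ∧
     (∀ p q : LPt t, lpDist t ε d M p q = lpDist t ε d M q p) ∧
     (∀ p q r : LPt t, lpDist t ε d M p r ≤ lpDist t ε d M p q + lpDist t ε d M q r)) ∧
    (lsPhi t ε d M {pa1 t, pb1 t} (insert_nonempty _ _) = t * d) ∧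
    (∀ i j : Fin t,
      lsPhi t ε d M {pA2 t i, pB2 t j} (insert_nonempty _ _) ≤ t * ε + d) ∧
    (∀ w : LPt t, w ≠ pa1 t → w ≠ pb1 t →
      t * d ≤ lsPhi t ε d M {pa1 t, w} (insert_nonempty _ _) ∧
      t * d ≤ lsPhi t ε d M {pb1 t, w} (insert_nonempty _ _)) :=
  local_search_bad_instance_general t ε d M hε hεd hdM
end
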